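/- arXiv:1308.2170 — 3 statements merged into one kernel-verified Lean document; each statement's English description precedes it below -/
import Mathlib

section
/- Let e ≥ 2, r = 3, with D^u as above for a fixed u ∈ {1,…,6}. Then: (i) for 1 ≤ k ≤ y+1, the set of matrices obtained from α^u_k by a single bead swap is exactly {α^u_{k′} : k′ ≠ k} ∪ {β^u_l : 1 ≤ l ≤ z+1} ∪ {γ^u_{kl} : 1 ≤ l ≤ z+1}; (ii) for 1 ≤ l ≤ z+1, the set of matrices obtained from β^u_l by a single bead swap is exactly {β^u_{l′} : l′ ≠ l} ∪ {α^u_k : 1 ≤ k ≤ y+1} ∪ {γ^u_{kl} : 1 ≤ k ≤ y+1}; (iii) for 1 ≤ k ≤ y+1 and 1 ≤ l ≤ z+1, the set of matrices obtained from γ^u_{kl} by a single bead swap is exactly {γ^u_{k′l} : k′ ≠ k} ∪ {γ^u_{kl′} : l′ ≠ l} ∪ {α^u_k} ∪ {β^u_l}. -/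
open scoped Classical

namespace AK
noncomputable section



/-! ### Matrices, order from base tuple, abacus β-sets -/

/-- The order ≺ on columns determined by a base tuple `B`. -/
def prec {e : ℕ} (B : Fin e → ℕ) (i j : Fin e) : Prop :=
  B i < B j ∨ (B i = B j ∧ i < j)

/-- `rank B i = π(B)⁻¹(i)`, the number of columns ≺-smaller than `i`. -/
def rank {e : ℕ} (B : Fin e → ℕ) (i : Fin e) : Fin e :=
  ⟨(Finset.univ.filter (fun j => prec B j i)).card, by
    have h1 : (Finset.univ.filter (fun j => prec B j i)) ⊆ Finset.univ.erase i := by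
      intro j hj
      rw [Finset.mem_filter] at hj
      refine Finset.mem_erase.mpr ⟨?_, Finset.mem_univ j⟩
      rintro rfl
      rcases hj.2 with h | ⟨-, h⟩ <;> exact lt_irrefl _ h
    have h2 := Finset.card_le_card h1
    have h3 : (Finset.univ.erase i).card < Finset.univ.card :=
      Finset.card_erase_lt_of_mem (Finset.mem_univ i)
    simpa using lt_of_le_of_lt h2 h3⟩

/-- The number of beads on runner `i` of the abacus of component `s` of `Pt(B,M)`. -/
def beads {e r : ℕ} (B : Fin e → ℕ) (M : Fin r → Fin e → Bool) (s : Fin r) (i : Fin e) : ℕ :=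
  B i + (if M s (rank B i) then 1 else 0)

/-- The canonical β-set of component `s` of `Pt(B,M)`. -/
def Tset {e r : ℕ} (B : Fin e → ℕ) (M : Fin r → Fin e → Bool) (s : Fin r) : Set ℤ :=
  {z | z < 0 ∨ (0 ≤ z ∧ ∃ h : z.toNat % e < e, z.toNat / e < beads B M s ⟨z.toNat % e, h⟩)}

/-- `n_s`, the total number of beads of component `s`. -/
def nsum {e r : ℕ} (B : Fin e → ℕ) (M : Fin r → Fin e → Bool) (s : Fin r) : ℕ :=
  ∑ i : Fin e, beads B M s i

/-- Decreasing enumeration of a set of integers: `tEnum T x` is `t_{x+1}`. -/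
noncomputable def tEnum (T : Set ℤ) : ℕ → ℤ
  | 0 => sSup T
  | (x + 1) => sSup (T ∩ Set.Iio (tEnum T x))

/-- The multipartition `Pt(B,M)`: component `s`, part `p+1` (0-indexed parts). -/
noncomputable def PtPart {e r : ℕ} (B : Fin e → ℕ) (M : Fin r → Fin e → Bool)
    (s : Fin r) (p : ℕ) : ℕ :=
  (tEnum (Tset B M s) p + (p + 1) - (nsum B M s : ℤ)).toNat

/-- The multicharge of `Pt(B,M)`. -/
noncomputable def PtCharge {e r : ℕ} (B : Fin e → ℕ) (M : Fin r → Fin e → Bool)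
    (s : Fin r) : ZMod e :=
  (nsum B M s : ZMod e)

/-! ### Nodes, good nodes and Kleshchev multipartitions -/

/-- A node `(s, x, y)` (all 0-indexed). -/
abbrev Node (r : ℕ) := Fin r × ℕ × ℕ

/-- `A` is above `B`. -/
def NodeAbove {r : ℕ} (A B : Node r) : Prop :=
  A.1 < B.1 ∨ (A.1 = B.1 ∧ A.2.1 < B.2.1)

/-- The residue of a node. -/
def res {e r : ℕ} (a : Fin r → ZMod e) (A : Node r) : ZMod e :=
  a A.1 - (A.2.1 : ZMod e) + (A.2.2 : ZMod e)

/-- `A` is a removable node of `lam`. -/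
def Removable {r : ℕ} (lam : Fin r → ℕ → ℕ) (A : Node r) : Prop :=
  A.2.2 + 1 = lam A.1 A.2.1 ∧ lam A.1 (A.2.1 + 1) < lam A.1 A.2.1

/-- `A` is an addable node of `lam`. -/
def Addable {r : ℕ} (lam : Fin r → ℕ → ℕ) (A : Node r) : Prop :=
  A.2.2 = lam A.1 A.2.1 ∧ (A.2.1 = 0 ∨ lam A.1 A.2.1 < lam A.1 (A.2.1 - 1))

/-- `A` is a normal node of `lam`. -/
def Normal {e r : ℕ} (a : Fin r → ZMod e) (lam : Fin r → ℕ → ℕ) (A : Node r) : Prop :=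
  Removable lam A ∧
    ∀ B : Node r, Addable lam B → res a B = res a A → NodeAbove A B →
      Set.ncard {C : Node r | Addable lam C ∧ res a C = res a A ∧ NodeAbove A C ∧ NodeAbove C B}
        < Set.ncard {C : Node r | Removable lam C ∧ res a C = res a A ∧ NodeAbove A C ∧ NodeAbove C B}

/-- `A` is a good node of `lam`: normal, and highest among normal nodes of its residue. -/
def Good {e r : ℕ} (a : Fin r → ZMod e) (lam : Fin r → ℕ → ℕ) (A : Node r) : Prop :=
  Normal a lam A ∧ ∀ B : Node r, Normal a lam B → res a B = res a A → B ≠ A → NodeAbove A B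

/-- Remove the node `A` from `lam`. -/
def removeNode {r : ℕ} (lam : Fin r → ℕ → ℕ) (A : Node r) : Fin r → ℕ → ℕ :=
  fun s x => if s = A.1 ∧ x = A.2.1 then lam s x - 1 else lam s x

/-- Kleshchev multipartitions (for the multicharge `a`). -/
inductive IsKleshchev {e r : ℕ} (a : Fin r → ZMod e) : (Fin r → ℕ → ℕ) → Prop
  | empty : IsKleshchev a (fun _ _ => 0)
  | step (lam : Fin r → ℕ → ℕ) (A : Node r) (hA : Good a lam A)
      (h : IsKleshchev a (removeNode lam A)) : IsKleshchev a lam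

/-! ### Weights and bead swaps -/

/-- `δ₊^M(t,s)`. -/
def deltaP {e r : ℕ} (M : Fin r → Fin e → Bool) (t s : Fin r) : ℕ :=
  (Finset.univ.filter (fun i => M t i = true ∧ M s i = false)).card

/-- `wt^M(t,s)`. -/
def wtPair {e r : ℕ} (M : Fin r → Fin e → Bool) (t s : Fin r) : ℕ :=
  min (deltaP M t s) (deltaP M s t)

/-- `wt(M)`. -/
def wtM {e r : ℕ} (M : Fin r → Fin e → Bool) : ℕ :=
  ∑ t : Fin r, ∑ s ∈ Finset.univ.filter (· < t), wtPair M t s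

/-- `M'` is obtained from `M` by a bead swap. -/
def BeadSwap {e r : ℕ} (M M' : Fin r → Fin e → Bool) : Prop :=
  ∃ i j : Fin e, i ≠ j ∧ ∃ s t : Fin r, s ≠ t ∧
    M s i = true ∧ M t j = true ∧ M s j = false ∧ M t i = false ∧
    M' s i = false ∧ M' t j = false ∧ M' s j = true ∧ M' t i = true ∧
    (∀ s' i', (s' ≠ s ∧ s' ≠ t) ∨ (i' ≠ i ∧ i' ≠ j) → M' s' i' = M s' i')




/-! ### The families `α^u_k`, `β^u_l`, `γ^u_{kl}` for `r = 3` -/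

def xcol : Fin 6 → Fin 3 → Bool := fun _ => ![false, false, false]

def ycol : Fin 6 → Fin 3 → Bool :=
  ![![false,true,true], ![true,false,false], ![true,true,false],
    ![false,false,true], ![false,true,true], ![true,false,false]]

def zcol : Fin 6 → Fin 3 → Bool :=
  ![![false,false,true], ![true,false,true], ![false,true,false],
    ![true,false,true], ![false,true,false], ![true,true,false]]

def oycol : Fin 6 → Fin 3 → Bool :=
  ![![true,false,true], ![false,false,true], ![false,true,true],
    ![true,false,false], ![true,true,false], ![false,true,false]]

def ozcol : Fin 6 → Fin 3 → Bool :=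
  ![![false,true,false], ![true,true,false], ![true,false,false],
    ![false,true,true], ![false,false,true], ![true,false,true]]

def aacol : Fin 6 → Fin 3 → Bool :=
  ![![true,true,false], ![false,true,false], ![true,false,true],
    ![false,true,false], ![true,false,true], ![false,false,true]]

def abcol : Fin 6 → Fin 3 → Bool :=
  ![![true,false,false], ![false,true,true], ![false,false,true],
    ![true,true,false], ![true,false,false], ![false,true,true]]

variable {e : ℕ}

/-- The matrix `α^u_k`. -/
def alphaM (Y Z : Finset (Fin e)) {y : ℕ} (hY : Y.card = y + 1) (u : Fin 6)
    (k : Fin (y + 1)) : Fin 3 → Fin e → Bool :=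
  fun s c =>
    if c = Y.orderEmbOfFin hY k then aacol u s
    else if c ∈ Y then ycol u s
    else if c ∈ Z then zcol u s
    else false

/-- The matrix `β^u_l`. -/
def betaM (Y Z : Finset (Fin e)) {z : ℕ} (hZ : Z.card = z + 1) (u : Fin 6)
    (l : Fin (z + 1)) : Fin 3 → Fin e → Bool :=
  fun s c =>
    if c = Z.orderEmbOfFin hZ l then abcol u s
    else if c ∈ Z then zcol u s
    else if c ∈ Y then ycol u s
    else false

/-- The matrix `γ^u_{kl}`. -/
def gammaM (Y Z : Finset (Fin e)) {y z : ℕ} (hY : Y.card = y + 1) (hZ : Z.card = z + 1)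
    (u : Fin 6) (k : Fin (y + 1)) (l : Fin (z + 1)) : Fin 3 → Fin e → Bool :=
  fun s c =>
    if c = Y.orderEmbOfFin hY k then oycol u s
    else if c = Z.orderEmbOfFin hZ l then ozcol u s
    else if c ∈ Y then ycol u s
    else if c ∈ Z then zcol u s
    else false

/-- The set `D^u` of matrices in the block. -/
def Duset (Y Z : Finset (Fin e)) {y z : ℕ} (hY : Y.card = y + 1) (hZ : Z.card = z + 1)
    (u : Fin 6) : Set (Fin 3 → Fin e → Bool) :=
  {A | (∃ k, A = alphaM Y Z hY u k) ∨ (∃ l, A = betaM Y Z hZ u l) ∨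
       (∃ k l, A = gammaM Y Z hY hZ u k l)}


/-! A bead swap changes exactly two columns `i ≠ j`: for rows `s ≠ t` with `M(s,i) = M(t,j) = 1`
and `M(s,j) = M(t,i) = 0` it composes both columns with the transposition `(s t)`. Among the
columns `x(u)`, `y(u)`, `z(u)` no such swap is possible, so every bead swap of a matrix of `D^u`
moves one of its (one or two) special columns. Pairing a special column with a column of `X`,
`Y` or `Z`, or with the other special column, is then a finite check on the seven column
vectors, and it produces exactly the listed matrices. -/

open Function

theorem update_update_update_of_eq {α β : Type*} [DecidableEq α] {f : α → β} {p : α}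
    {b : β} (h : f p = b) (a : β) (q : α) (c : β) :
    update (update (update f p a) p b) q c = update f q c := by
  rw [update_idem, ← h, update_eq_self]

theorem exists_orderEmbOfFin_eq {α : Type*} [LinearOrder α] {s : Finset α} {k : ℕ}
    (h : s.card = k) {a : α} (ha : a ∈ s) : ∃ i, s.orderEmbOfFin h i = a := by
  rwa [← Set.mem_range, Finset.range_orderEmbOfFin]

section ColSwaps

variable {r : ℕ}

/-- The pairs of columns into which a bead swap can turn the columns `v`, `w`. -/
def colSwaps (v w : Fin r → Bool) : Finset ((Fin r → Bool) × (Fin r → Bool)) :=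
  ((Finset.univ : Finset (Fin r × Fin r)).filter fun st =>
      st.1 ≠ st.2 ∧ v st.1 = true ∧ w st.2 = true ∧ w st.1 = false ∧ v st.2 = false).image
    fun st => (v ∘ Equiv.swap st.1 st.2, w ∘ Equiv.swap st.1 st.2)

theorem mem_colSwaps {v w v' w' : Fin r → Bool} :
    (v', w') ∈ colSwaps v w ↔ ∃ s t, s ≠ t ∧ v s = true ∧ w t = true ∧ w s = false ∧
      v t = false ∧ v ∘ Equiv.swap s t = v' ∧ w ∘ Equiv.swap s t = w' := by
  simp [colSwaps, and_assoc]

theorem mem_colSwaps_comm {v w v' w' : Fin r → Bool} :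
    (v', w') ∈ colSwaps v w ↔ (w', v') ∈ colSwaps w v := by
  suffices ∀ {v w v' w' : Fin r → Bool}, (v', w') ∈ colSwaps v w → (w', v') ∈ colSwaps w v
    from ⟨this, this⟩
  intro v w v' w' h
  obtain ⟨s, t, hst, hvs, hwt, hws, hvt, rfl, rfl⟩ := mem_colSwaps.1 h
  exact mem_colSwaps.2
    ⟨t, s, hst.symm, hwt, hvs, hvt, hws, by rw [Equiv.swap_comm], by rw [Equiv.swap_comm]⟩

/-- A matrix is written as `swap F` for its family of columns `F`. -/
theorem beadSwap_swap_iff (F : Fin e → Fin r → Bool) (L : Fin r → Fin e → Bool) :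
    BeadSwap (swap F) L ↔ ∃ i j v w, i ≠ j ∧ (v, w) ∈ colSwaps (F i) (F j) ∧
      L = swap (update (update F i v) j w) := by
  simp only [mem_colSwaps]
  constructor
  · rintro ⟨i, j, hij, s, t, hst, h1, h2, h3, h4, h5, h6, h7, h8, hL⟩
    refine ⟨i, j, _, _, hij, ⟨s, t, hst, h1, h2, h3, h4, rfl, rfl⟩, ?_⟩
    funext s' c
    simp only [swap, update_apply] at *
    split_ifs <;> simp_all [Equiv.swap_apply_def] <;> split_ifs <;> simp_all
  · rintro ⟨i, j, v, w, hij, ⟨s, t, hst, h1, h2, h3, h4, rfl, rfl⟩, rfl⟩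
    refine ⟨i, j, hij, s, t, hst, h1, h2, h3, h4, ?_⟩
    simp only [swap, update_apply]
    refine ⟨?_, ?_, ?_, ?_, fun s' c h => ?_⟩ <;> split_ifs <;> simp_all [Equiv.swap_apply_def]

theorem exists_mem_of_beadSwap {F G : Fin e → Fin r → Bool} {S : Set (Fin e)}
    {L : Fin r → Fin e → Bool} (hG : ∀ c d, colSwaps (G c) (G d) = ∅)
    (hFG : ∀ c ∉ S, F c = G c) (h : BeadSwap (swap F) L) :
    ∃ i ∈ S, ∃ j v w, i ≠ j ∧ (v, w) ∈ colSwaps (F i) (F j) ∧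
      L = swap (update (update F i v) j w) := by
  obtain ⟨i, j, v, w, hij, hsw, rfl⟩ := (beadSwap_swap_iff F L).1 h
  by_cases hi : i ∈ S
  · exact ⟨i, hi, j, v, w, hij, hsw, rfl⟩
  · have hj : j ∈ S := by
      by_contra hj
      rw [hFG i hi, hFG j hj, hG] at hsw
      exact Finset.notMem_empty _ hsw
    exact ⟨j, hj, i, w, v, hij.symm, mem_colSwaps_comm.1 hsw, by rw [update_comm hij]⟩

end ColSwaps

theorem colSwaps_xyz : ∀ u : Fin 6,
    ∀ p ∈ ({xcol u, ycol u, zcol u} : Finset (Fin 3 → Bool)),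
    ∀ q ∈ ({xcol u, ycol u, zcol u} : Finset (Fin 3 → Bool)), colSwaps p q = ∅ := by
  decide

theorem colSwaps_aacol : ∀ u : Fin 6,
    colSwaps (aacol u) (xcol u) = ∅ ∧
    colSwaps (aacol u) (ycol u) = {(ycol u, aacol u)} ∧
    colSwaps (aacol u) (zcol u) = {(ycol u, abcol u), (oycol u, ozcol u)} := by
  decide

theorem colSwaps_abcol : ∀ u : Fin 6,
    colSwaps (abcol u) (xcol u) = ∅ ∧
    colSwaps (abcol u) (ycol u) = {(zcol u, aacol u), (ozcol u, oycol u)} ∧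
    colSwaps (abcol u) (zcol u) = {(zcol u, abcol u)} := by
  decide

theorem colSwaps_oycol : ∀ u : Fin 6,
    colSwaps (oycol u) (xcol u) = ∅ ∧
    colSwaps (oycol u) (ycol u) = {(ycol u, oycol u)} ∧
    colSwaps (oycol u) (zcol u) = ∅ ∧
    colSwaps (oycol u) (ozcol u) = {(aacol u, zcol u), (ycol u, abcol u)} := by
  decide

theorem colSwaps_ozcol : ∀ u : Fin 6,
    colSwaps (ozcol u) (xcol u) = ∅ ∧
    colSwaps (ozcol u) (ycol u) = ∅ ∧
    colSwaps (ozcol u) (zcol u) = {(zcol u, ozcol u)} := by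
  decide

theorem xcol_apply (u : Fin 6) (s : Fin 3) : xcol u s = false := by
  fin_cases s <;> rfl

def baseCols (Y Z : Finset (Fin e)) (u : Fin 6) (c : Fin e) : Fin 3 → Bool :=
  if c ∈ Y then ycol u else if c ∈ Z then zcol u else xcol u

section Duset

variable {Y Z : Finset (Fin e)} {y z : ℕ} (hY : Y.card = y + 1) (hZ : Z.card = z + 1) (u : Fin 6)

theorem colSwaps_baseCols (c d : Fin e) : colSwaps (baseCols Y Z u c) (baseCols Y Z u d) = ∅ := by
  have hmem : ∀ c, baseCols Y Z u c ∈ ({xcol u, ycol u, zcol u} : Finset (Fin 3 → Bool)) := by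
    intro c
    unfold baseCols
    split_ifs <;> simp
  exact colSwaps_xyz u _ (hmem c) _ (hmem d)

theorem baseCols_of_mem_left {c : Fin e} (h : c ∈ Y) : baseCols Y Z u c = ycol u := if_pos h

theorem baseCols_of_mem_right (hYZ : Disjoint Y Z) {c : Fin e} (h : c ∈ Z) :
    baseCols Y Z u c = zcol u := by
  simp [baseCols, h, Finset.disjoint_right.mp hYZ h]

theorem mem_colSwaps_aacol_baseCols (hYZ : Disjoint Y Z) (c : Fin e) (v w : Fin 3 → Bool) :
    (v, w) ∈ colSwaps (aacol u) (baseCols Y Z u c) ↔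
      c ∈ Y ∧ v = ycol u ∧ w = aacol u ∨
      c ∈ Z ∧ (v = ycol u ∧ w = abcol u ∨ v = oycol u ∧ w = ozcol u) := by
  obtain ⟨hx, hy, hz⟩ := colSwaps_aacol u
  unfold baseCols
  split_ifs with hcY hcZ
  · simp [hy, hcY, Finset.disjoint_left.mp hYZ hcY]
  · simp [hz, hcY, hcZ]
  · simp [hx, hcY, hcZ]

theorem mem_colSwaps_abcol_baseCols (hYZ : Disjoint Y Z) (c : Fin e) (v w : Fin 3 → Bool) :
    (v, w) ∈ colSwaps (abcol u) (baseCols Y Z u c) ↔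
      c ∈ Z ∧ v = zcol u ∧ w = abcol u ∨
      c ∈ Y ∧ (v = zcol u ∧ w = aacol u ∨ v = ozcol u ∧ w = oycol u) := by
  obtain ⟨hx, hy, hz⟩ := colSwaps_abcol u
  unfold baseCols
  split_ifs with hcY hcZ
  · simp [hy, hcY, Finset.disjoint_left.mp hYZ hcY]
  · simp [hz, hcY, hcZ]
  · simp [hx, hcY, hcZ]

theorem mem_colSwaps_oycol_baseCols (c : Fin e) (v w : Fin 3 → Bool) :
    (v, w) ∈ colSwaps (oycol u) (baseCols Y Z u c) ↔
      c ∈ Y ∧ v = ycol u ∧ w = oycol u := by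
  obtain ⟨hx, hy, hz, -⟩ := colSwaps_oycol u
  unfold baseCols
  split_ifs with hcY
  · simp [hy, hcY]
  · simp [hz, hcY]
  · simp [hx, hcY]

theorem mem_colSwaps_ozcol_baseCols (hYZ : Disjoint Y Z) (c : Fin e) (v w : Fin 3 → Bool) :
    (v, w) ∈ colSwaps (ozcol u) (baseCols Y Z u c) ↔
      c ∈ Z ∧ v = zcol u ∧ w = ozcol u := by
  obtain ⟨hx, hy, hz⟩ := colSwaps_ozcol u
  unfold baseCols
  split_ifs with hcY hcZ
  · simp [hy, Finset.disjoint_left.mp hYZ hcY]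
  · simp [hz, hcZ]
  · simp [hx, hcZ]

theorem alphaM_eq_swap (k : Fin (y + 1)) :
    alphaM Y Z hY u k = swap (update (baseCols Y Z u) (Y.orderEmbOfFin hY k) (aacol u)) := by
  funext s c
  simp only [alphaM, baseCols, swap, update_apply]
  split_ifs <;> simp [xcol_apply]

theorem betaM_eq_swap (hYZ : Disjoint Y Z) (l : Fin (z + 1)) :
    betaM Y Z hZ u l = swap (update (baseCols Y Z u) (Z.orderEmbOfFin hZ l) (abcol u)) := by
  funext s c
  simp only [betaM, baseCols, swap, update_apply]
  have hcZY : c ∈ Z → c ∉ Y := fun h => Finset.disjoint_right.mp hYZ h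
  split_ifs <;> simp_all [xcol_apply]

theorem orderEmbOfFin_ne (hYZ : Disjoint Y Z) (k : Fin (y + 1)) (l : Fin (z + 1)) :
    Y.orderEmbOfFin hY k ≠ Z.orderEmbOfFin hZ l :=
  Finset.disjoint_iff_ne.mp hYZ _ (Y.orderEmbOfFin_mem hY k) _ (Z.orderEmbOfFin_mem hZ l)

def gammaCols (k : Fin (y + 1)) (l : Fin (z + 1)) : Fin e → Fin 3 → Bool :=
  update (update (baseCols Y Z u) (Z.orderEmbOfFin hZ l) (ozcol u)) (Y.orderEmbOfFin hY k)
    (oycol u)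

theorem gammaM_eq_swap (k : Fin (y + 1)) (l : Fin (z + 1)) :
    gammaM Y Z hY hZ u k l = swap (gammaCols hY hZ u k l) := by
  funext s c
  simp only [gammaM, gammaCols, baseCols, swap, update_apply]
  split_ifs <;> simp [xcol_apply]

section Gamma

variable (k : Fin (y + 1)) (l : Fin (z + 1))

theorem gammaCols_left : gammaCols hY hZ u k l (Y.orderEmbOfFin hY k) = oycol u :=
  update_self ..

theorem gammaCols_right (hYZ : Disjoint Y Z) :
    gammaCols hY hZ u k l (Z.orderEmbOfFin hZ l) = ozcol u := by
  rw [gammaCols, update_of_ne (orderEmbOfFin_ne hY hZ hYZ k l).symm, update_self]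

theorem gammaCols_of_ne {c : Fin e} (hck : c ≠ Y.orderEmbOfFin hY k)
    (hcl : c ≠ Z.orderEmbOfFin hZ l) : gammaCols hY hZ u k l c = baseCols Y Z u c := by
  rw [gammaCols, update_of_ne hck, update_of_ne hcl]

theorem mem_colSwaps_gammaCols (hYZ : Disjoint Y Z) (v w : Fin 3 → Bool) :
    (v, w) ∈ colSwaps (gammaCols hY hZ u k l (Y.orderEmbOfFin hY k))
        (gammaCols hY hZ u k l (Z.orderEmbOfFin hZ l)) ↔
      v = aacol u ∧ w = zcol u ∨ v = ycol u ∧ w = abcol u := by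
  rw [gammaCols_left, gammaCols_right hY hZ u k l hYZ, (colSwaps_oycol u).2.2.2]
  simp

theorem update_gammaCols_left_ycol (hYZ : Disjoint Y Z) :
    update (gammaCols hY hZ u k l) (Y.orderEmbOfFin hY k) (ycol u) =
      update (baseCols Y Z u) (Z.orderEmbOfFin hZ l) (ozcol u) := by
  rw [gammaCols, update_idem, update_eq_self_iff, update_of_ne (orderEmbOfFin_ne hY hZ hYZ k l),
    baseCols_of_mem_left u (Y.orderEmbOfFin_mem hY k)]

theorem update_gammaCols_right_zcol (hYZ : Disjoint Y Z) :
    update (gammaCols hY hZ u k l) (Z.orderEmbOfFin hZ l) (zcol u) =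
      update (baseCols Y Z u) (Y.orderEmbOfFin hY k) (oycol u) := by
  have hq : update (baseCols Y Z u) (Z.orderEmbOfFin hZ l) (zcol u) = baseCols Y Z u :=
    update_eq_self_iff.2 (baseCols_of_mem_right u hYZ (Z.orderEmbOfFin_mem hZ l)).symm
  rw [gammaCols, update_comm (orderEmbOfFin_ne hY hZ hYZ k l), update_idem, hq]

theorem update_gammaCols_left (hYZ : Disjoint Y Z) (k' : Fin (y + 1)) :
    update (update (gammaCols hY hZ u k l) (Y.orderEmbOfFin hY k) (ycol u))
      (Y.orderEmbOfFin hY k') (oycol u) = gammaCols hY hZ u k' l := by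
  rw [update_gammaCols_left_ycol hY hZ u k l hYZ, gammaCols]

theorem update_gammaCols_right (hYZ : Disjoint Y Z) (l' : Fin (z + 1)) :
    update (update (gammaCols hY hZ u k l) (Z.orderEmbOfFin hZ l) (zcol u))
      (Z.orderEmbOfFin hZ l') (ozcol u) = gammaCols hY hZ u k l' := by
  rw [update_gammaCols_right_zcol hY hZ u k l hYZ, gammaCols,
    update_comm (orderEmbOfFin_ne hY hZ hYZ k l')]

theorem update_gammaCols_eq_alpha (hYZ : Disjoint Y Z) :
    update (update (gammaCols hY hZ u k l) (Y.orderEmbOfFin hY k) (aacol u))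
      (Z.orderEmbOfFin hZ l) (zcol u) =
        update (baseCols Y Z u) (Y.orderEmbOfFin hY k) (aacol u) := by
  rw [update_comm (orderEmbOfFin_ne hY hZ hYZ k l), update_gammaCols_right_zcol hY hZ u k l hYZ,
    update_idem]

theorem update_gammaCols_eq_beta (hYZ : Disjoint Y Z) :
    update (update (gammaCols hY hZ u k l) (Y.orderEmbOfFin hY k) (ycol u))
      (Z.orderEmbOfFin hZ l) (abcol u) =
        update (baseCols Y Z u) (Z.orderEmbOfFin hZ l) (abcol u) := by
  rw [update_gammaCols_left_ycol hY hZ u k l hYZ, update_idem]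

end Gamma

theorem setOf_beadSwap_alphaM (hYZ : Disjoint Y Z) (k : Fin (y + 1)) :
    {L : Fin 3 → Fin e → Bool | BeadSwap (alphaM Y Z hY u k) L} =
      {L | (∃ k', k' ≠ k ∧ L = alphaM Y Z hY u k') ∨ (∃ l, L = betaM Y Z hZ u l) ∨
        (∃ l, L = gammaM Y Z hY hZ u k l)} := by
  ext L
  simp only [Set.mem_ofPred_eq, alphaM_eq_swap, betaM_eq_swap hZ u hYZ, gammaM_eq_swap]
  set p := Y.orderEmbOfFin hY k
  have hpY : p ∈ Y := Y.orderEmbOfFin_mem hY k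
  have hp := baseCols_of_mem_left (Z := Z) u hpY
  constructor
  · intro h
    obtain ⟨i, rfl, j, v, w, hij, hsw, rfl⟩ := exists_mem_of_beadSwap (S := {p})
      (colSwaps_baseCols u) (fun c hc => update_of_ne hc _ _) h
    rw [update_self, update_of_ne hij.symm, mem_colSwaps_aacol_baseCols u hYZ] at hsw
    rcases hsw with ⟨hjY, rfl, rfl⟩ | ⟨hjZ, ⟨rfl, rfl⟩ | ⟨rfl, rfl⟩⟩
    · obtain ⟨k', rfl⟩ := exists_orderEmbOfFin_eq hY hjY
      exact .inl ⟨k', fun h => hij (h ▸ rfl), by rw [update_update_update_of_eq hp]⟩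
    · obtain ⟨l, rfl⟩ := exists_orderEmbOfFin_eq hZ hjZ
      exact .inr (.inl ⟨l, by rw [update_update_update_of_eq hp]⟩)
    · obtain ⟨l, rfl⟩ := exists_orderEmbOfFin_eq hZ hjZ
      exact .inr (.inr ⟨l, by rw [update_idem, update_comm hij, gammaCols]⟩)
  · rw [beadSwap_swap_iff]
    rintro (⟨k', hk', rfl⟩ | ⟨l, rfl⟩ | ⟨l, rfl⟩)
    · have hne : p ≠ Y.orderEmbOfFin hY k' := (Y.orderEmbOfFin hY).injective.ne hk'.symm
      refine ⟨p, _, ycol u, aacol u, hne, ?_, by rw [update_update_update_of_eq hp]⟩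
      rw [update_self, update_of_ne hne.symm, mem_colSwaps_aacol_baseCols u hYZ]
      exact .inl ⟨Y.orderEmbOfFin_mem hY k', rfl, rfl⟩
    · have hne := orderEmbOfFin_ne hY hZ hYZ k l
      refine ⟨p, _, ycol u, abcol u, hne, ?_, by rw [update_update_update_of_eq hp]⟩
      rw [update_self, update_of_ne hne.symm, mem_colSwaps_aacol_baseCols u hYZ]
      exact .inr ⟨Z.orderEmbOfFin_mem hZ l, .inl ⟨rfl, rfl⟩⟩
    · have hne := orderEmbOfFin_ne hY hZ hYZ k l
      refine ⟨p, _, oycol u, ozcol u, hne, ?_, by rw [update_idem, update_comm hne, gammaCols]⟩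
      rw [update_self, update_of_ne hne.symm, mem_colSwaps_aacol_baseCols u hYZ]
      exact .inr ⟨Z.orderEmbOfFin_mem hZ l, .inr ⟨rfl, rfl⟩⟩

theorem setOf_beadSwap_betaM (hYZ : Disjoint Y Z) (l : Fin (z + 1)) :
    {L : Fin 3 → Fin e → Bool | BeadSwap (betaM Y Z hZ u l) L} =
      {L | (∃ l', l' ≠ l ∧ L = betaM Y Z hZ u l') ∨ (∃ k, L = alphaM Y Z hY u k) ∨
        (∃ k, L = gammaM Y Z hY hZ u k l)} := by
  ext L
  simp only [Set.mem_ofPred_eq, alphaM_eq_swap, betaM_eq_swap hZ u hYZ, gammaM_eq_swap]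
  set q := Z.orderEmbOfFin hZ l
  have hqZ : q ∈ Z := Z.orderEmbOfFin_mem hZ l
  have hq := baseCols_of_mem_right u hYZ hqZ
  constructor
  · intro h
    obtain ⟨i, rfl, j, v, w, hij, hsw, rfl⟩ := exists_mem_of_beadSwap (S := {q})
      (colSwaps_baseCols u) (fun c hc => update_of_ne hc _ _) h
    rw [update_self, update_of_ne hij.symm, mem_colSwaps_abcol_baseCols u hYZ] at hsw
    rcases hsw with ⟨hjZ, rfl, rfl⟩ | ⟨hjY, ⟨rfl, rfl⟩ | ⟨rfl, rfl⟩⟩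
    · obtain ⟨l', rfl⟩ := exists_orderEmbOfFin_eq hZ hjZ
      exact .inl ⟨l', fun h => hij (h ▸ rfl), by rw [update_update_update_of_eq hq]⟩
    · obtain ⟨k, rfl⟩ := exists_orderEmbOfFin_eq hY hjY
      exact .inr (.inl ⟨k, by rw [update_update_update_of_eq hq]⟩)
    · obtain ⟨k, rfl⟩ := exists_orderEmbOfFin_eq hY hjY
      exact .inr (.inr ⟨k, by rw [update_idem, gammaCols]⟩)
  · rw [beadSwap_swap_iff]
    rintro (⟨l', hl', rfl⟩ | ⟨k, rfl⟩ | ⟨k, rfl⟩)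
    · have hne : q ≠ Z.orderEmbOfFin hZ l' := (Z.orderEmbOfFin hZ).injective.ne hl'.symm
      refine ⟨q, _, zcol u, abcol u, hne, ?_, by rw [update_update_update_of_eq hq]⟩
      rw [update_self, update_of_ne hne.symm, mem_colSwaps_abcol_baseCols u hYZ]
      exact .inl ⟨Z.orderEmbOfFin_mem hZ l', rfl, rfl⟩
    · have hne := (orderEmbOfFin_ne hY hZ hYZ k l).symm
      refine ⟨q, _, zcol u, aacol u, hne, ?_, by rw [update_update_update_of_eq hq]⟩
      rw [update_self, update_of_ne hne.symm, mem_colSwaps_abcol_baseCols u hYZ]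
      exact .inr ⟨Y.orderEmbOfFin_mem hY k, .inl ⟨rfl, rfl⟩⟩
    · have hne := (orderEmbOfFin_ne hY hZ hYZ k l).symm
      refine ⟨q, _, ozcol u, oycol u, hne, ?_, by rw [update_idem, gammaCols]⟩
      rw [update_self, update_of_ne hne.symm, mem_colSwaps_abcol_baseCols u hYZ]
      exact .inr ⟨Y.orderEmbOfFin_mem hY k, .inr ⟨rfl, rfl⟩⟩

theorem beadSwap_gammaM_cases (hYZ : Disjoint Y Z) (k : Fin (y + 1)) (l : Fin (z + 1))
    {L : Fin 3 → Fin e → Bool} (h : BeadSwap (gammaM Y Z hY hZ u k l) L) :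
    (∃ k', k' ≠ k ∧ L = gammaM Y Z hY hZ u k' l) ∨
      (∃ l', l' ≠ l ∧ L = gammaM Y Z hY hZ u k l') ∨
      L = alphaM Y Z hY u k ∨ L = betaM Y Z hZ u l := by
  simp only [alphaM_eq_swap, betaM_eq_swap hZ u hYZ, gammaM_eq_swap] at h ⊢
  set p := Y.orderEmbOfFin hY k
  set q := Z.orderEmbOfFin hZ l
  have hαβ : ∀ {v w},
      (v, w) ∈ colSwaps (gammaCols hY hZ u k l p) (gammaCols hY hZ u k l q) →
      swap (update (update (gammaCols hY hZ u k l) p v) q w) =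
          swap (update (baseCols Y Z u) p (aacol u)) ∨
        swap (update (update (gammaCols hY hZ u k l) p v) q w) =
          swap (update (baseCols Y Z u) q (abcol u)) := by
    intro v w hvw
    rcases (mem_colSwaps_gammaCols hY hZ u k l hYZ v w).1 hvw with ⟨rfl, rfl⟩ | ⟨rfl, rfl⟩
    exacts [.inl (by rw [update_gammaCols_eq_alpha hY hZ u k l hYZ]),
      .inr (by rw [update_gammaCols_eq_beta hY hZ u k l hYZ])]
  obtain ⟨i, hi, j, v, w, hij, hsw, rfl⟩ := exists_mem_of_beadSwap (S := {p, q})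
    (colSwaps_baseCols u) (fun c hc => gammaCols_of_ne hY hZ u k l (fun h => hc (.inl h))
      (fun h => hc (.inr h))) h
  rcases hi with rfl | rfl
  · by_cases hjq : j = q
    · subst hjq
      exact .inr (.inr (hαβ hsw))
    · rw [gammaCols_left, gammaCols_of_ne hY hZ u k l (Ne.symm hij) hjq,
        mem_colSwaps_oycol_baseCols] at hsw
      obtain ⟨hjY, rfl, rfl⟩ := hsw
      obtain ⟨k', rfl⟩ := exists_orderEmbOfFin_eq hY hjY
      exact .inl ⟨k', fun h => hij (h ▸ rfl), by rw [update_gammaCols_left hY hZ u k l hYZ]⟩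
  · by_cases hjp : j = p
    · subst hjp
      rw [update_comm hij]
      exact .inr (.inr (hαβ (mem_colSwaps_comm.1 hsw)))
    · rw [gammaCols_right hY hZ u k l hYZ, gammaCols_of_ne hY hZ u k l hjp (Ne.symm hij),
        mem_colSwaps_ozcol_baseCols u hYZ] at hsw
      obtain ⟨hjZ, rfl, rfl⟩ := hsw
      obtain ⟨l', rfl⟩ := exists_orderEmbOfFin_eq hZ hjZ
      exact .inr (.inl ⟨l', fun h => hij (h ▸ rfl),
        by rw [update_gammaCols_right hY hZ u k l hYZ]⟩)

theorem setOf_beadSwap_gammaM (hYZ : Disjoint Y Z) (k : Fin (y + 1)) (l : Fin (z + 1)) :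
    {L : Fin 3 → Fin e → Bool | BeadSwap (gammaM Y Z hY hZ u k l) L} =
      {L | (∃ k', k' ≠ k ∧ L = gammaM Y Z hY hZ u k' l) ∨
        (∃ l', l' ≠ l ∧ L = gammaM Y Z hY hZ u k l') ∨
        L = alphaM Y Z hY u k ∨ L = betaM Y Z hZ u l} := by
  ext L
  refine ⟨beadSwap_gammaM_cases hY hZ u hYZ k l, ?_⟩
  simp only [Set.mem_ofPred_eq, alphaM_eq_swap, betaM_eq_swap hZ u hYZ, gammaM_eq_swap,
    beadSwap_swap_iff]
  set p := Y.orderEmbOfFin hY k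
  set q := Z.orderEmbOfFin hZ l
  have hpq : p ≠ q := orderEmbOfFin_ne hY hZ hYZ k l
  rintro (⟨k', hk', rfl⟩ | ⟨l', hl', rfl⟩ | rfl | rfl)
  · have hne : p ≠ Y.orderEmbOfFin hY k' := (Y.orderEmbOfFin hY).injective.ne hk'.symm
    refine ⟨p, _, ycol u, oycol u, hne, ?_, by rw [update_gammaCols_left hY hZ u k l hYZ]⟩
    rw [gammaCols_left, gammaCols_of_ne hY hZ u k l hne.symm (orderEmbOfFin_ne hY hZ hYZ k' l),
      mem_colSwaps_oycol_baseCols]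
    exact ⟨Y.orderEmbOfFin_mem hY k', rfl, rfl⟩
  · have hne : q ≠ Z.orderEmbOfFin hZ l' := (Z.orderEmbOfFin hZ).injective.ne hl'.symm
    refine ⟨q, _, zcol u, ozcol u, hne, ?_, by rw [update_gammaCols_right hY hZ u k l hYZ]⟩
    rw [gammaCols_right hY hZ u k l hYZ,
      gammaCols_of_ne hY hZ u k l (orderEmbOfFin_ne hY hZ hYZ k l').symm hne.symm,
      mem_colSwaps_ozcol_baseCols u hYZ]
    exact ⟨Z.orderEmbOfFin_mem hZ l', rfl, rfl⟩
  · refine ⟨p, q, _, _, hpq,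
      (mem_colSwaps_gammaCols hY hZ u k l hYZ _ _).2 (.inl ⟨rfl, rfl⟩),
      by rw [update_gammaCols_eq_alpha hY hZ u k l hYZ]⟩
  · refine ⟨p, q, _, _, hpq,
      (mem_colSwaps_gammaCols hY hZ u k l hYZ _ _).2 (.inr ⟨rfl, rfl⟩),
      by rw [update_gammaCols_eq_beta hY hZ u k l hYZ]⟩

end Duset

theorem Duset_single_beadSwaps_general (e : ℕ)
    (Y Z : Finset (Fin e)) {y z : ℕ} (hY : Y.card = y + 1) (hZ : Z.card = z + 1)
    (hYZ : Disjoint Y Z) (u : Fin 6) :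
    (∀ k : Fin (y + 1),
      {L : Fin 3 → Fin e → Bool | BeadSwap (alphaM Y Z hY u k) L} =
        {L | (∃ k', k' ≠ k ∧ L = alphaM Y Z hY u k') ∨
             (∃ l, L = betaM Y Z hZ u l) ∨
             (∃ l, L = gammaM Y Z hY hZ u k l)}) ∧
    (∀ l : Fin (z + 1),
      {L : Fin 3 → Fin e → Bool | BeadSwap (betaM Y Z hZ u l) L} =
        {L | (∃ l', l' ≠ l ∧ L = betaM Y Z hZ u l') ∨
             (∃ k, L = alphaM Y Z hY u k) ∨
             (∃ k, L = gammaM Y Z hY hZ u k l)}) ∧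
    (∀ (k : Fin (y + 1)) (l : Fin (z + 1)),
      {L : Fin 3 → Fin e → Bool | BeadSwap (gammaM Y Z hY hZ u k l) L} =
        {L | (∃ k', k' ≠ k ∧ L = gammaM Y Z hY hZ u k' l) ∨
             (∃ l', l' ≠ l ∧ L = gammaM Y Z hY hZ u k l') ∨
             L = alphaM Y Z hY u k ∨ L = betaM Y Z hZ u l}) :=
  ⟨setOf_beadSwap_alphaM hY hZ u hYZ, setOf_beadSwap_betaM hY hZ u hYZ,
    setOf_beadSwap_gammaM hY hZ u hYZ⟩

/-- The matrices obtained from an element of `D^u` by a single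
bead swap. -/
theorem Duset_single_beadSwaps (e : ℕ) (he : 2 ≤ e)
    (X Y Z : Finset (Fin e)) {y z : ℕ} (hY : Y.card = y + 1) (hZ : Z.card = z + 1)
    (hXY : Disjoint X Y) (hXZ : Disjoint X Z) (hYZ : Disjoint Y Z)
    (hcover : X ∪ Y ∪ Z = Finset.univ) (u : Fin 6) :
    (∀ k : Fin (y + 1),
      {L : Fin 3 → Fin e → Bool | BeadSwap (alphaM Y Z hY u k) L} =
        {L | (∃ k', k' ≠ k ∧ L = alphaM Y Z hY u k') ∨
             (∃ l, L = betaM Y Z hZ u l) ∨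
             (∃ l, L = gammaM Y Z hY hZ u k l)}) ∧
    (∀ l : Fin (z + 1),
      {L : Fin 3 → Fin e → Bool | BeadSwap (betaM Y Z hZ u l) L} =
        {L | (∃ l', l' ≠ l ∧ L = betaM Y Z hZ u l') ∨
             (∃ k, L = alphaM Y Z hY u k) ∨
             (∃ k, L = gammaM Y Z hY hZ u k l)}) ∧
    (∀ (k : Fin (y + 1)) (l : Fin (z + 1)),
      {L : Fin 3 → Fin e → Bool | BeadSwap (gammaM Y Z hY hZ u k l) L} =
        {L | (∃ k', k' ≠ k ∧ L = gammaM Y Z hY hZ u k' l) ∨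
             (∃ l', l' ≠ l ∧ L = gammaM Y Z hY hZ u k l') ∨
             L = alphaM Y Z hY u k ∨ L = betaM Y Z hZ u l}) :=
  Duset_single_beadSwaps_general e Y Z hY hZ hYZ u

end
end AK
end

section
/- Let e ≥ 2, r = 3, let B be a base tuple, and let L, M ∈ M̌(3,e) with L ∼ M, wt(L) = 2, and L indecomposable (for every partition of {1,2,3} into nonempty sets S, T there exist s ∈ S, t ∈ T with wt^L(s,t) ≥ 1). Set μ = Pt(B,L) and λ = Pt(B,M). Then μ ≈ λ if and only if μ ⤳ λ and, for the columns i < j and the row index k ∈ {1,2} witnessing μ ⤳ λ (i.e., with L(k,j) = L(k+1,i) = M(k,i) = M(k+1,j) = 1, L(k,i) = L(k+1,j) = M(k,j) = M(k+1,i) = 0, and all other entries of L and M equal), one has #{x : i < x < j and L(k,x) = 1} = #{x : i < x < j and L(k+1,x) = 1}. -/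
open scoped Classical

namespace AK
noncomputable section



/-! ### Moving rim hooks between consecutive components (r = 3) -/

/-- `T'` is obtained from the β-set `T` by removing a rim hook of length `h`,
using the bead `β`. -/
def HookRemove (T T' : Set ℤ) (h : ℕ) (β : ℤ) : Prop :=
  β ∈ T ∧ (β - (h : ℤ)) ∉ T ∧ T' = (T \ {β}) ∪ {β - (h : ℤ)}

/-- `Pt(B,M)` is obtained from `Pt(B,L)` by removing a rim hook of length `h`
from component `k` (using bead `β`) and adding a rim hook of the same length
to component `k+1` (using bead `β'`). -/
def LeadsToWith {e : ℕ} (B : Fin e → ℕ) (L M : Fin 3 → Fin e → Bool)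
    (k : Fin 2) (h : ℕ) (β β' : ℤ) : Prop :=
  1 ≤ h ∧
  HookRemove (Tset B L k.castSucc) (Tset B M k.castSucc) h β ∧
  HookRemove (Tset B M k.succ) (Tset B L k.succ) h β' ∧
  (∀ s : Fin 3, s ≠ k.castSucc → s ≠ k.succ → Tset B L s = Tset B M s)

/-- `Pt(B,L) ⤳ Pt(B,M)`. -/
def LeadsTo {e : ℕ} (B : Fin e → ℕ) (L M : Fin 3 → Fin e → Bool) : Prop :=
  ∃ k h β β', LeadsToWith B L M k h β β'

/-- `Pt(B,L) ≈ Pt(B,M)`: as `⤳`, with the two rim hooks of equal leg lengths. -/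
def RelEq {e : ℕ} (B : Fin e → ℕ) (L M : Fin 3 → Fin e → Bool) : Prop :=
  ∃ k h β β', LeadsToWith B L M k h β β' ∧
    Set.ncard {w : ℤ | w ∈ Tset B L k.castSucc ∧ β - (h : ℤ) < w ∧ w < β}
      = Set.ncard {w : ℤ | w ∈ Tset B M k.succ ∧ β' - (h : ℤ) < w ∧ w < β'}

/-!
Entry `(s, c)` of a matrix decides only whether the abacus of component `s` carries a bead at
position `slot B c = π(c) + e·b_{π(c)}`; every other position is occupied independently of the
matrix, and `slot B` is strictly increasing. So removing a rim hook from component `k` is the same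
as moving the bead of row `k` from some column `j` to an earlier empty column `i`, and its leg
length is the number of matrix-independent beads between the two slots plus the number of entries
of row `k` strictly between `i` and `j`. Bead swaps preserve column sums, which forces the two rim
hooks of `⤳` to be moved between the same pair of columns; the leg lengths then agree exactly when
rows `k` and `k+1` have equally many entries strictly between `i` and `j`.
-/

section ColumnOrder

variable {e : ℕ} (B : Fin e → ℕ)

lemma prec_iff {u v : Fin e} : prec B u v ↔ (u : ℤ) + e * B u < v + e * B v := by
  have hu := u.isLt
  have hv := v.isLt
  rw [prec, Fin.lt_def]
  rcases lt_trichotomy (B u) (B v) with h | h | h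
  · have : (B u + 1 : ℤ) ≤ B v := by exact_mod_cast h
    simp only [h, true_or, true_iff]
    nlinarith
  · simp only [h, lt_irrefl, false_or, true_and]
    omega
  · have : (B v + 1 : ℤ) ≤ B u := by exact_mod_cast h
    simp only [h.not_gt, h.ne', false_and, or_self, false_iff, not_lt]
    nlinarith

lemma prec_or_prec {u v : Fin e} (h : u ≠ v) : prec B u v ∨ prec B v u := by
  rcases lt_trichotomy (B u) (B v) with hB | hB | hB
  · exact .inl (.inl hB)
  · rcases h.lt_or_gt with huv | huv
    · exact .inl (.inr ⟨hB, huv⟩)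
    · exact .inr (.inr ⟨hB.symm, huv⟩)
  · exact .inr (.inl hB)

lemma rank_lt_rank {u v : Fin e} (h : prec B u v) : rank B u < rank B v := by
  have hsub : Finset.univ.filter (prec B · u) ⊂ Finset.univ.filter (prec B · v) := by
    refine (Finset.ssubset_iff_of_subset fun w hw => ?_).mpr ⟨u, ?_, ?_⟩
    · simp only [Finset.mem_filter, Finset.mem_univ, true_and, prec_iff] at hw h ⊢
      exact hw.trans h
    · simpa using h
    · simp [prec_iff]
  exact Finset.card_lt_card hsub

lemma rank_injective : Function.Injective (rank B) := by
  intro u v huv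
  by_contra hne
  rcases prec_or_prec B hne with h | h
  · exact (rank_lt_rank B h).ne huv
  · exact (rank_lt_rank B h).ne huv.symm

/-- The permutation `π(B)`: `perm B c` is the runner whose bead is recorded in column `c`. -/
def perm : Equiv.Perm (Fin e) :=
  (Equiv.ofBijective (rank B) (Finite.injective_iff_bijective.mp (rank_injective B))).symm

@[simp]
lemma rank_perm (c : Fin e) : rank B (perm B c) = c :=
  (Equiv.ofBijective (rank B) _).apply_symm_apply c

@[simp]
lemma perm_rank (u : Fin e) : perm B (rank B u) = u :=
  (Equiv.ofBijective (rank B) _).symm_apply_apply u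

/-- The abacus position of the bead that column `c` of a matrix switches on or off. -/
def slot (c : Fin e) : ℤ := perm B c + e * B (perm B c)

lemma slot_strictMono : StrictMono (slot B) := by
  intro c c' hcc'
  have hne : perm B c ≠ perm B c' := (perm B).injective.ne hcc'.ne
  rcases prec_or_prec B hne with h | h
  · exact (prec_iff B).mp h
  · have := rank_lt_rank B h
    simp only [rank_perm] at this
    exact absurd hcc' this.not_gt

end ColumnOrder

section BetaSets

variable {e r : ℕ} (B : Fin e → ℕ)

lemma mem_Tset_add_mul (M : Fin r → Fin e → Bool) (s : Fin r) (u : Fin e) (m : ℕ) :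
    (u + e * m : ℤ) ∈ Tset B M s ↔ m < beads B M s u := by
  have he : 0 < e := u.pos
  have htoNat : ((u : ℤ) + e * m).toNat = u + e * m := by omega
  have hmod : (u + e * m) % e = u := by rw [Nat.add_mul_mod_self_left, Nat.mod_eq_of_lt u.isLt]
  have hdiv : (u + e * m) / e = m := by
    rw [Nat.add_mul_div_left _ _ he, Nat.div_eq_of_lt u.isLt, zero_add]
  simp only [Tset, Set.mem_ofPred_eq, htoNat, hmod, hdiv]
  constructor
  · rintro (h | ⟨-, _, h⟩)
    · omega
    · exact h
  · exact fun h => .inr ⟨by positivity, u.isLt, h⟩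

lemma mem_Tset_slot (M : Fin r → Fin e → Bool) (s : Fin r) (c : Fin e) :
    slot B c ∈ Tset B M s ↔ M s c = true := by
  rw [slot, mem_Tset_add_mul, beads, rank_perm]
  cases M s c <;> simp

lemma mem_Tset_iff_of_forall_slot_ne {z : ℤ} (hz : ∀ c, slot B c ≠ z)
    (L M : Fin r → Fin e → Bool) (s t : Fin r) : z ∈ Tset B L s ↔ z ∈ Tset B M t := by
  simp only [Tset, Set.mem_ofPred_eq]
  refine or_congr_right (and_congr_right fun hz0 => exists_congr fun hlt => ?_)
  set u : Fin e := ⟨z.toNat % e, hlt⟩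
  have hm : z.toNat / e ≠ B u := by
    intro hm
    apply hz (rank B u)
    have hdecomp : ((z.toNat % e + e * (z.toNat / e) : ℕ) : ℤ) = z := by
      rw [Nat.mod_add_div]; omega
    rw [slot, perm_rank, ← hdecomp, ← hm]
    push_cast
    rfl
  simp only [beads]
  split_ifs <;> omega

lemma exists_slot_eq_of_mem_of_not_mem {L M : Fin r → Fin e → Bool} {s t : Fin r} {z : ℤ}
    (hL : z ∈ Tset B L s) (hM : z ∉ Tset B M t) : ∃ c, slot B c = z := by
  by_contra! h
  exact hM ((mem_Tset_iff_of_forall_slot_ne B h L M s t).mp hL)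

lemma row_eq_of_Tset_eq {L M : Fin r → Fin e → Bool} {s t : Fin r}
    (h : Tset B L s = Tset B M t) : L s = M t :=
  funext fun c => Bool.eq_iff_iff.mpr (by rw [← mem_Tset_slot, ← mem_Tset_slot, h])

end BetaSets

section Hooks

variable {e r : ℕ} (B : Fin e → ℕ)

def MovesBead (P Q : Fin e → Bool) (i j : Fin e) : Prop :=
  P j = true ∧ Q j = false ∧ P i = false ∧ Q i = true ∧ ∀ c, c ≠ i → c ≠ j → P c = Q c

lemma MovesBead.ne {P Q : Fin e → Bool} {i j : Fin e} (h : MovesBead P Q i j) : i ≠ j := by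
  rintro rfl
  exact absurd h.1 (by simp [h.2.2.1])

lemma MovesBead.card_filter_eq {P Q : Fin e → Bool} {i j : Fin e} (h : MovesBead P Q i j) :
    (Finset.univ.filter fun x => i < x ∧ x < j ∧ P x = true).card =
      (Finset.univ.filter fun x => i < x ∧ x < j ∧ Q x = true).card := by
  congr 1
  refine Finset.filter_congr fun x _ => ?_
  exact and_congr_right fun hix => and_congr_right fun hxj => by rw [h.2.2.2.2 x hix.ne' hxj.ne]

lemma hookRemove_Tset_iff {L M : Fin r → Fin e → Bool} {s : Fin r} {h : ℕ} {β : ℤ} :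
    HookRemove (Tset B L s) (Tset B M s) h β ↔
      ∃ i j, slot B i = β - h ∧ slot B j = β ∧ MovesBead (L s) (M s) i j := by
  constructor
  · rintro ⟨hβ, hβh, hT⟩
    have hne : β ≠ β - h := fun heq => hβh (heq ▸ hβ)
    have hβ' : β ∉ Tset B M s := by simp [hT, hne]
    have hβh' : β - h ∈ Tset B M s := by simp [hT]
    obtain ⟨i, hi⟩ := exists_slot_eq_of_mem_of_not_mem B hβh' hβh
    obtain ⟨j, hj⟩ := exists_slot_eq_of_mem_of_not_mem B hβ hβ'
    subst hj
    rw [← hi] at hβh hβh' hT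
    refine ⟨i, j, hi, rfl, (mem_Tset_slot B L s j).mp hβ, ?_, ?_, (mem_Tset_slot B M s i).mp hβh',
      fun c hci hcj => ?_⟩
    · simpa [mem_Tset_slot] using hβ'
    · simpa [mem_Tset_slot] using hβh
    · have hc : slot B c ∈ Tset B M s ↔ slot B c ∈ Tset B L s := by
        simp [hT, (slot_strictMono B).injective.eq_iff, hci, hcj]
      rw [mem_Tset_slot, mem_Tset_slot] at hc
      exact Bool.eq_iff_iff.mpr hc.symm
  · rintro ⟨i, j, hi, rfl, hmove⟩
    have hij := hmove.ne
    obtain ⟨hLj, hMj, hLi, hMi, hrest⟩ := hmove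
    rw [HookRemove, ← hi]
    refine ⟨(mem_Tset_slot B L s j).mpr hLj, by simp [mem_Tset_slot, hLi], Set.ext fun z => ?_⟩
    by_cases hz : ∃ c, slot B c = z
    · obtain ⟨c, rfl⟩ := hz
      simp only [Set.mem_union, Set.mem_sdiff, Set.mem_singleton_iff, mem_Tset_slot,
        (slot_strictMono B).injective.eq_iff]
      by_cases hci : c = i
      · simp [hci, hMi, hij]
      by_cases hcj : c = j
      · simp [hcj, hMj, hij.symm]
      simp [hci, hcj, hrest c hci hcj]
    · simp only [not_exists] at hz
      rw [mem_Tset_iff_of_forall_slot_ne B hz M L s s]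
      simp [Ne.symm (hz i), Ne.symm (hz j)]


lemma ncard_Tset_Ioo (M : Fin r → Fin e → Bool) (s : Fin r) (i j : Fin e) :
    {w | w ∈ Tset B M s ∧ slot B i < w ∧ w < slot B j}.ncard =
      {w | w ∈ Tset B M s ∧ slot B i < w ∧ w < slot B j ∧ ∀ c, slot B c ≠ w}.ncard +
        (Finset.univ.filter fun x => i < x ∧ x < j ∧ M s x = true).card := by
  have hmono := slot_strictMono B
  have hsplit : {w | w ∈ Tset B M s ∧ slot B i < w ∧ w < slot B j} =
      {w | w ∈ Tset B M s ∧ slot B i < w ∧ w < slot B j ∧ ∀ c, slot B c ≠ w} ∪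
        slot B '' {x | i < x ∧ x < j ∧ M s x = true} := by
    ext w
    constructor
    · rintro ⟨hw, hiw, hwj⟩
      by_cases hslot : ∃ c, slot B c = w
      · obtain ⟨c, rfl⟩ := hslot
        exact .inr ⟨c, ⟨hmono.lt_iff_lt.mp hiw, hmono.lt_iff_lt.mp hwj,
          (mem_Tset_slot B M s c).mp hw⟩, rfl⟩
      · exact .inl ⟨hw, hiw, hwj, not_exists.mp hslot⟩
    · rintro (⟨hw, hiw, hwj, -⟩ | ⟨c, ⟨hic, hcj, hc⟩, rfl⟩)
      · exact ⟨hw, hiw, hwj⟩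
      · exact ⟨(mem_Tset_slot B M s c).mpr hc, hmono hic, hmono hcj⟩
  have hdisj : Disjoint {w | w ∈ Tset B M s ∧ slot B i < w ∧ w < slot B j ∧ ∀ c, slot B c ≠ w}
      (slot B '' {x | i < x ∧ x < j ∧ M s x = true}) :=
    Set.disjoint_left.mpr fun w hw ⟨c, _, hc⟩ => hw.2.2.2 c hc
  have hfin : {w | w ∈ Tset B M s ∧ slot B i < w ∧ w < slot B j ∧ ∀ c, slot B c ≠ w}.Finite :=
    (Set.finite_Ioo (slot B i) (slot B j)).subset fun w hw => ⟨hw.2.1, hw.2.2.1⟩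
  rw [hsplit, Set.ncard_union_eq hdisj hfin, Set.ncard_image_of_injective _ hmono.injective,
    ← Finset.coe_filter_univ fun x => i < x ∧ x < j ∧ M s x = true, Set.ncard_coe_finset]

lemma ncard_Tset_Ioo_eq_iff (L M : Fin r → Fin e → Bool) (s t : Fin r) (i j : Fin e) :
    {w | w ∈ Tset B L s ∧ slot B i < w ∧ w < slot B j}.ncard =
        {w | w ∈ Tset B M t ∧ slot B i < w ∧ w < slot B j}.ncard ↔
      (Finset.univ.filter fun x => i < x ∧ x < j ∧ L s x = true).card =
        (Finset.univ.filter fun x => i < x ∧ x < j ∧ M t x = true).card := by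
  have hoff : {w | w ∈ Tset B L s ∧ slot B i < w ∧ w < slot B j ∧ ∀ c, slot B c ≠ w} =
      {w | w ∈ Tset B M t ∧ slot B i < w ∧ w < slot B j ∧ ∀ c, slot B c ≠ w} := by
    ext w
    exact and_congr_left fun hw => mem_Tset_iff_of_forall_slot_ne B hw.2.2 L M s t
  rw [ncard_Tset_Ioo, ncard_Tset_Ioo, hoff, Nat.add_left_cancel_iff]

end Hooks

section ColumnCounts

variable {e r : ℕ}

def colCount (M : Fin r → Fin e → Bool) (c : Fin e) : ℕ := ∑ s, (M s c).toNat

lemma colCount_eq_iff {L M : Fin r → Fin e → Bool} {s t : Fin r} {c : Fin e} (hst : s ≠ t)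
    (hrest : ∀ u, u ≠ s → u ≠ t → L u c = M u c) :
    colCount L c = colCount M c ↔
      (L s c).toNat + (L t c).toNat = (M s c).toNat + (M t c).toNat := by
  have hsplit (N : Fin r → Fin e → Bool) :
      colCount N c = (N s c).toNat + (N t c).toNat + ∑ u ∈ {s, t}ᶜ, (N u c).toNat := by
    rw [colCount, ← Finset.sum_add_sum_compl {s, t}, Finset.sum_pair hst]
  have hcompl : ∑ u ∈ {s, t}ᶜ, (L u c).toNat = ∑ u ∈ {s, t}ᶜ, (M u c).toNat :=
    Finset.sum_congr rfl fun u hu => by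
      simp only [Finset.mem_compl, Finset.mem_insert, Finset.mem_singleton, not_or] at hu
      rw [hrest u hu.1 hu.2]
  rw [hsplit L, hsplit M, hcompl, Nat.add_right_cancel_iff]

lemma BeadSwap.colCount_eq {L M : Fin r → Fin e → Bool} (hLM : BeadSwap L M) (c : Fin e) :
    colCount L c = colCount M c := by
  obtain ⟨i, j, -, s, t, hst, hLsi, hLtj, hLsj, hLti, hMsi, hMtj, hMsj, hMti, hrest⟩ := hLM
  rw [colCount_eq_iff hst fun u hs ht => (hrest u c (.inl ⟨hs, ht⟩)).symm]
  by_cases hci : c = i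
  · subst hci
    simp [hLsi, hLti, hMsi, hMti]
  by_cases hcj : c = j
  · subst hcj
    simp [hLsj, hLtj, hMsj, hMtj]
  rw [hrest s c (.inr ⟨hci, hcj⟩), hrest t c (.inr ⟨hci, hcj⟩)]

lemma colCount_eq_of_eqvGen {L M : Fin r → Fin e → Bool} (h : Relation.EqvGen BeadSwap L M)
    (c : Fin e) : colCount L c = colCount M c := by
  induction h with
  | rel _ _ h => exact h.colCount_eq c
  | refl => rfl
  | symm _ _ _ ih => exact ih.symm
  | trans _ _ _ _ _ ih₁ ih₂ => exact ih₁.trans ih₂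

lemma MovesBead.eq_of_toNat_add_eq {P Q P' Q' : Fin e → Bool} {i j i' j' : Fin e}
    (h : MovesBead P Q i j) (h' : MovesBead Q' P' i' j')
    (hcol : ∀ c, (P c).toNat + (P' c).toNat = (Q c).toNat + (Q' c).toNat) :
    i = i' ∧ j = j' := by
  obtain ⟨hPj, hQj, hPi, hQi, -⟩ := h
  obtain ⟨hQ'j', hP'j', hQ'i', hP'i', hrest⟩ := h'
  have hj := hcol j
  have hi := hcol i
  rw [hPj, hQj] at hj
  rw [hPi, hQi] at hi
  constructor
  · by_contra hne
    by_cases hij' : i = j'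
    · subst hij'
      simp [hP'j', hQ'j'] at hi
    · have := hrest i hne hij'
      cases hQ' : Q' i <;> cases hP' : P' i <;> simp_all
  · by_contra hne
    by_cases hji' : j = i'
    · subst hji'
      simp [hQ'i', hP'i'] at hj
    · have := hrest j hji' hne
      cases hQ' : Q' j <;> cases hP' : P' j <;> simp_all

end ColumnCounts

section LeadsTo

variable {e : ℕ} {B : Fin e → ℕ} {L M : Fin 3 → Fin e → Bool} {k : Fin 2}

lemma LeadsToWith.exists_movesBead {h : ℕ} {β β' : ℤ} (hlead : LeadsToWith B L M k h β β')
    (hcol : ∀ c, colCount L c = colCount M c) :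
    ∃ i j, i < j ∧ slot B j = β ∧ slot B j = β' ∧ slot B i = β - h ∧
      MovesBead (L k.castSucc) (M k.castSucc) i j ∧ MovesBead (M k.succ) (L k.succ) i j ∧
      ∀ s, s ≠ k.castSucc → s ≠ k.succ → L s = M s := by
  obtain ⟨hh, hk, hk1, hother⟩ := hlead
  obtain ⟨i, j, hi, hj, hmove⟩ := hookRemove_Tset_iff B |>.mp hk
  obtain ⟨i', j', -, hj', hmove'⟩ := hookRemove_Tset_iff B |>.mp hk1
  have hrest : ∀ s, s ≠ k.castSucc → s ≠ k.succ → L s = M s :=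
    fun s hs hs' => row_eq_of_Tset_eq B (hother s hs hs')
  have hpair (c : Fin e) := (colCount_eq_iff Fin.castSucc_lt_succ.ne
    fun s hs hs' => congrFun (hrest s hs hs') c).mp (hcol c)
  obtain ⟨rfl, rfl⟩ := hmove.eq_of_toNat_add_eq hmove' hpair
  have hij : i < j := (slot_strictMono B).lt_iff_lt.mp (by omega)
  exact ⟨i, j, hij, hj, hj', hi, hmove, hmove', hrest⟩

lemma exists_leadsToWith_of_movesBead {i j : Fin e} (hij : i < j)
    (hk : MovesBead (L k.castSucc) (M k.castSucc) i j) (hk1 : MovesBead (M k.succ) (L k.succ) i j)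
    (hrest : ∀ s, s ≠ k.castSucc → s ≠ k.succ → L s = M s) :
    ∃ h : ℕ, slot B j - h = slot B i ∧ LeadsToWith B L M k h (slot B j) (slot B j) := by
  have hslot := slot_strictMono B hij
  refine ⟨(slot B j - slot B i).toNat, by omega, by omega, ?_, ?_, fun s hs hs' => ?_⟩
  · exact (hookRemove_Tset_iff B).mpr ⟨i, j, by omega, rfl, hk⟩
  · exact (hookRemove_Tset_iff B).mpr ⟨i, j, by omega, rfl, hk1⟩
  · simp only [Tset, beads, hrest s hs hs']

end LeadsTo

theorem relEq_matrix_characterisation_general (e : ℕ)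
    (B : Fin e → ℕ)
    (L M : Fin 3 → Fin e → Bool)
    (hequiv : Relation.EqvGen BeadSwap L M) :
    RelEq B L M ↔
      ∃ i j : Fin e, i < j ∧ ∃ k : Fin 2,
        L k.castSucc j = true ∧ L k.succ i = true ∧
        M k.castSucc i = true ∧ M k.succ j = true ∧
        L k.castSucc i = false ∧ L k.succ j = false ∧
        M k.castSucc j = false ∧ M k.succ i = false ∧
        (∀ (k' : Fin 3) (i' : Fin e),
          (k' ≠ k.castSucc ∧ k' ≠ k.succ) ∨ (i' ≠ i ∧ i' ≠ j) →
            L k' i' = M k' i') ∧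
        (Finset.univ.filter
            (fun x : Fin e => i < x ∧ x < j ∧ L k.castSucc x = true)).card =
          (Finset.univ.filter
            (fun x : Fin e => i < x ∧ x < j ∧ L k.succ x = true)).card := by
  constructor
  · rintro ⟨k, h, β, β', hlead, hleg⟩
    obtain ⟨i, j, hij, rfl, rfl, hi, hk, hk1, hrest⟩ :=
      hlead.exists_movesBead (colCount_eq_of_eqvGen hequiv)
    rw [← hi, ncard_Tset_Ioo_eq_iff, hk1.card_filter_eq] at hleg
    obtain ⟨hLkj, hMkj, hLki, hMki, hmid⟩ := hk
    obtain ⟨hMk1j, hLk1j, hMk1i, hLk1i, hmid1⟩ := hk1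
    refine ⟨i, j, hij, k, hLkj, hLk1i, hMki, hMk1j, hLki, hLk1j, hMkj, hMk1i, ?_, hleg⟩
    rintro s c (⟨hs, hs'⟩ | ⟨hci, hcj⟩)
    · rw [hrest s hs hs']
    by_cases hs : s = k.castSucc
    · exact hs ▸ hmid c hci hcj
    by_cases hs' : s = k.succ
    · exact hs' ▸ (hmid1 c hci hcj).symm
    rw [hrest s hs hs']
  · rintro ⟨i, j, hij, k, hLkj, hLk1i, hMki, hMk1j, hLki, hLk1j, hMkj, hMk1i, hentries, hleg⟩
    have hk : MovesBead (L k.castSucc) (M k.castSucc) i j :=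
      ⟨hLkj, hMkj, hLki, hMki, fun c hci hcj => hentries _ c (.inr ⟨hci, hcj⟩)⟩
    have hk1 : MovesBead (M k.succ) (L k.succ) i j :=
      ⟨hMk1j, hLk1j, hMk1i, hLk1i, fun c hci hcj => (hentries _ c (.inr ⟨hci, hcj⟩)).symm⟩
    obtain ⟨h, hi, hlead⟩ := exists_leadsToWith_of_movesBead (B := B) hij hk hk1
      fun s hs hs' => funext fun c => hentries s c (.inl ⟨hs, hs'⟩)
    refine ⟨k, h, _, _, hlead, ?_⟩
    rwa [hi, ncard_Tset_Ioo_eq_iff, hk1.card_filter_eq]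

/-- Matrix characterisation of `Pt(B,L) ≈ Pt(B,M)` (equal leg
lengths) in an indecomposable core block of weight 2 with `r = 3`. -/
theorem relEq_matrix_characterisation (e : ℕ) (he : 2 ≤ e)
    (B : Fin e → ℕ) (hB : ∃ i, B i = 0)
    (L M : Fin 3 → Fin e → Bool)
    (hLcheck : ∀ i : Fin e, ∃ s : Fin 3, L s i = false)
    (hMcheck : ∀ i : Fin e, ∃ s : Fin 3, M s i = false)
    (hequiv : Relation.EqvGen BeadSwap L M)
    (hwt : wtM L = 2)
    (hind : ∀ S T : Finset (Fin 3), S.Nonempty → T.Nonempty → Disjoint S T →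
      S ∪ T = Finset.univ → ∃ s ∈ S, ∃ t ∈ T, 1 ≤ wtPair L s t) :
    RelEq B L M ↔
      ∃ i j : Fin e, i < j ∧ ∃ k : Fin 2,
        L k.castSucc j = true ∧ L k.succ i = true ∧
        M k.castSucc i = true ∧ M k.succ j = true ∧
        L k.castSucc i = false ∧ L k.succ j = false ∧
        M k.castSucc j = false ∧ M k.succ i = false ∧
        (∀ (k' : Fin 3) (i' : Fin e),
          (k' ≠ k.castSucc ∧ k' ≠ k.succ) ∨ (i' ≠ i ∧ i' ≠ j) →
            L k' i' = M k' i') ∧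
        (Finset.univ.filter
            (fun x : Fin e => i < x ∧ x < j ∧ L k.castSucc x = true)).card =
          (Finset.univ.filter
            (fun x : Fin e => i < x ∧ x < j ∧ L k.succ x = true)).card :=
  relEq_matrix_characterisation_general e B L M hequiv


end
end AK
end

section
/- Let e ≥ 2, r ≥ 2, let Y ∈ Λ, let π be a permutation of {1,…,r}, and let M ∈ 𝔑(Y,π). Then M ∼ N₀(Y,π), where N₀(Y,π) = Δ^π(Y,((1),(1,r)),(1)). -/
open scoped Classical

namespace AK
noncomputable section



/-! ### Weight graphs and the sets `T^y(i,j)` -/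

/-- The weight graph of `M`. -/
def wGraph {e r : ℕ} (M : Fin r → Fin e → Bool) : SimpleGraph (Fin r) :=
  SimpleGraph.fromRel (fun s t => wtPair M s t = 1)

/-- The weight graph of `M` is a tree. -/
def GTree {e r : ℕ} (M : Fin r → Fin e → Bool) : Prop :=
  (∀ s t : Fin r, s ≠ t → wtPair M s t ≤ 1) ∧ (wGraph M).IsTree

/-- The column vector `I(a)` (1-based rows `1,…,a` are ones). -/
def Ivec (r a : ℕ) : Fin r → Bool := fun s => decide (s.1 + 1 ≤ a)

/-- The condition `(i,j) ∈ P_t(y)`. -/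
def PtPairCond (r t : ℕ) (y : ℕ → ℕ) (iseq : Fin t → ℕ) (jseq : Fin (t + 1) → ℕ) : Prop :=
  jseq 0 = 1 ∧ jseq (Fin.last t) = r ∧
  (∀ m : Fin t, jseq m.castSucc ≤ iseq m) ∧
  (∀ m : Fin t, iseq m < jseq m.succ) ∧
  (∀ m : Fin t, 1 ≤ y (iseq m))

/-- The column vector `c_m(i,j)`: `I(i_m)` with the entries in (1-based) rows
`j_m` and `j_{m+1}` interchanged. -/
def cvec (r : ℕ) {t : ℕ} (iseq : Fin t → ℕ) (jseq : Fin (t + 1) → ℕ) (m : Fin t) :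
    Fin r → Bool :=
  fun s =>
    if s.1 + 1 = jseq m.castSucc then decide (jseq m.succ ≤ iseq m)
    else if s.1 + 1 = jseq m.succ then decide (jseq m.castSucc ≤ iseq m)
    else decide (s.1 + 1 ≤ iseq m)

/-- The multiset of columns of a matrix. -/
def colMultiset {e r : ℕ} (M : Fin r → Fin e → Bool) : Multiset (Fin r → Bool) :=
  (Finset.univ.val : Multiset (Fin e)).map fun c => fun s => M s c

/-- `M ∈ T^y(i,j)`. -/
def memT (r e : ℕ) (y : ℕ → ℕ) {t : ℕ} (iseq : Fin t → ℕ) (jseq : Fin (t + 1) → ℕ)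
    (M : Fin r → Fin e → Bool) : Prop :=
  ∃ w0 wr : ℕ,
    colMultiset M =
      (∑ a ∈ Finset.Icc 1 (r - 1),
        Multiset.replicate (if ∃ m, iseq m = a then y a - 1 else y a) (Ivec r a))
      + ((Finset.univ.val : Multiset (Fin t)).map (cvec r iseq jseq))
      + Multiset.replicate w0 (Ivec r 0) + Multiset.replicate wr (Ivec r r)

/-! ### The sets `𝔑(Y,π)` -/

/-- `Y_a` for a natural-number index `a`. -/
def Yat {e : ℕ} (r : ℕ) (Y : Fin r → Finset (Fin e)) (a : ℕ) : Finset (Fin e) :=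
  if h : a < r then Y ⟨a, h⟩ else ∅

/-- `Y ∈ Λ`. -/
def LambdaMem {e : ℕ} (r : ℕ) (Y : Fin r → Finset (Fin e)) : Prop :=
  (∀ a b : Fin r, a ≠ b → Disjoint (Y a) (Y b)) ∧
  (∀ c : Fin e, ∃ a, c ∈ Y a) ∧
  (Yat r Y 1).Nonempty ∧ (Yat r Y (r - 1)).Nonempty

/-- The matrix `Δ(Y,(i,j),w)`. -/
def DeltaM {e : ℕ} (r : ℕ) {t : ℕ} (Y : Fin r → Finset (Fin e))
    (iseq : Fin t → ℕ) (jseq : Fin (t + 1) → ℕ) (w : Fin t → ℕ) :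
    Fin r → Fin e → Bool :=
  fun s c =>
    if h : ∃ u : Fin t, ((Yat r Y (iseq u)).sort (· ≤ ·))[w u - 1]? = some c then
      cvec r iseq jseq (Classical.choose h) s
    else if h2 : ∃ a : Fin r, c ∈ Y a then Ivec r ((Classical.choose h2).1) s
    else false

/-- The set `𝔑(Y,π)`. -/
def Nset {e : ℕ} (r : ℕ) (Y : Fin r → Finset (Fin e)) (π : Equiv.Perm (Fin r)) :
    Set (Fin r → Fin e → Bool) :=
  {M | ∃ t, 1 ≤ t ∧ t ≤ r - 1 ∧
    ∃ (iseq : Fin t → ℕ) (jseq : Fin (t + 1) → ℕ) (w : Fin t → ℕ),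
      PtPairCond r t (fun a => (Yat r Y a).card) iseq jseq ∧
      (∀ u, 1 ≤ w u ∧ w u ≤ (Yat r Y (iseq u)).card) ∧
      M = fun s c => DeltaM r Y iseq jseq w (π s) c}

/-- The matrix `N(Y,π) = Δ^π(Y,((1),(1,r)),(1))`. -/
def Nzero {e : ℕ} (r : ℕ) (Y : Fin r → Finset (Fin e)) (π : Equiv.Perm (Fin r)) :
    Fin r → Fin e → Bool :=
  fun s c => DeltaM r Y (fun _ : Fin 1 => 1) ![1, r] (fun _ : Fin 1 => 1) (π s) c

/-! Bead swaps preserve the row and column sums of a matrix, and conversely (Ryser's interchange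
theorem) any two 0/1 matrices with the same row and column sums are joined by a chain of bead
swaps: make the first rows agree by swaps that each repair two discrepancies, then recurse on the
remaining rows. So it suffices to see that all matrices of `𝔑(Y,π)` share their row and column
sums. Column `c ∈ Y_a` of `Δ(Y,(i,j),w)` is `I(a)` or a row permutation of it, so it has `a` ones.
Replacing `I(i_m)` by `c_m(i,j)` moves one bead from row `j_m` to row `j_{m+1}`; along
`1 = j_1 < ⋯ < j_{t+1} = r` these moves telescope to a single move from row `1` to row `r`. -/

open Finset

section Interchange

variable {e r : ℕ}

def rowSum (M : Fin r → Fin e → Bool) (s : Fin r) : ℕ := ∑ c, (M s c).toNat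

def colSum (M : Fin r → Fin e → Bool) (c : Fin e) : ℕ := ∑ s, (M s c).toNat

lemma sum_eq_sum_of_eq_comp_swap {α β : Type*} [Fintype α] [DecidableEq α] [AddCommMonoid β]
    {f g : α → β} {i j : α} (hi : g i = f j) (hj : g j = f i)
    (h : ∀ x, x ≠ i → x ≠ j → g x = f x) : ∑ x, g x = ∑ x, f x := by
  have hg : g = f ∘ Equiv.swap i j := by
    funext x
    by_cases hxi : x = i
    · simp [hxi, hi]
    by_cases hxj : x = j
    · simp [hxj, hj]
    simp [Equiv.swap_apply_of_ne_of_ne hxi hxj, h x hxi hxj]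
  rw [hg]
  exact Equiv.sum_comp (Equiv.swap i j) f

lemma BeadSwap.rowSum_eq {M M' : Fin r → Fin e → Bool} (h : BeadSwap M M') (s' : Fin r) :
    rowSum M' s' = rowSum M s' := by
  obtain ⟨i, j, -, s, t, -, hsi, htj, hsj, hti, hsi', htj', hsj', hti', hrest⟩ := h
  have hcol : ∀ x, x ≠ i → x ≠ j → (M' s' x).toNat = (M s' x).toNat :=
    fun x hxi hxj => by rw [hrest s' x (Or.inr ⟨hxi, hxj⟩)]
  by_cases hs : s' = s
  · subst hs
    exact sum_eq_sum_of_eq_comp_swap (by rw [hsi', hsj]) (by rw [hsj', hsi]) hcol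
  by_cases ht : s' = t
  · subst ht
    exact sum_eq_sum_of_eq_comp_swap (by rw [hti', htj]) (by rw [htj', hti]) hcol
  exact Finset.sum_congr rfl fun x _ => by rw [hrest s' x (Or.inl ⟨hs, ht⟩)]

lemma BeadSwap.colSum_eq {M M' : Fin r → Fin e → Bool} (h : BeadSwap M M') (c : Fin e) :
    colSum M' c = colSum M c := by
  obtain ⟨i, j, -, s, t, -, hsi, htj, hsj, hti, hsi', htj', hsj', hti', hrest⟩ := h
  have hrow : ∀ x, x ≠ s → x ≠ t → (M' x c).toNat = (M x c).toNat :=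
    fun x hxs hxt => by rw [hrest x c (Or.inl ⟨hxs, hxt⟩)]
  by_cases hi : c = i
  · subst hi
    exact sum_eq_sum_of_eq_comp_swap (by rw [hsi', hti]) (by rw [hti', hsi]) hrow
  by_cases hj : c = j
  · subst hj
    exact sum_eq_sum_of_eq_comp_swap (by rw [hsj', htj]) (by rw [htj', hsj]) hrow
  exact Finset.sum_congr rfl fun x _ => by rw [hrest x c (Or.inr ⟨hi, hj⟩)]

lemma BeadSwap.cons {M M' : Fin r → Fin e → Bool} (z : Fin e → Bool) (h : BeadSwap M M') :
    BeadSwap (Fin.cons z M : Fin (r + 1) → Fin e → Bool) (Fin.cons z M') := by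
  obtain ⟨i, j, hij, s, t, hst, h1, h2, h3, h4, h5, h6, h7, h8, hrest⟩ := h
  refine ⟨i, j, hij, s.succ, t.succ, (Fin.succ_injective r).ne hst,
    h1, h2, h3, h4, h5, h6, h7, h8, fun s' i' hout => ?_⟩
  cases s' using Fin.cases with
  | zero => rfl
  | succ k =>
    refine hrest k i' (hout.imp_left fun hk => ?_)
    exact ⟨fun hks => hk.1 (congrArg _ hks), fun hkt => hk.2 (congrArg _ hkt)⟩

lemma eqvGen_beadSwap_cons {M M' : Fin r → Fin e → Bool} (z : Fin e → Bool)
    (h : Relation.EqvGen BeadSwap M M') :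
    Relation.EqvGen BeadSwap (Fin.cons z M : Fin (r + 1) → Fin e → Bool) (Fin.cons z M') := by
  induction h with
  | rel _ _ h => exact .rel _ _ (h.cons z)
  | refl => exact .refl _
  | symm _ _ _ ih => exact .symm _ _ ih
  | trans _ _ _ _ _ ih₁ ih₂ => exact .trans _ _ _ ih₁ ih₂

def swapBeads (M : Fin r → Fin e → Bool) (s t : Fin r) (i j : Fin e) : Fin r → Fin e → Bool :=
  fun s' c => if (s' = s ∨ s' = t) ∧ (c = i ∨ c = j) then !M s' c else M s' c

lemma beadSwap_swapBeads {M : Fin r → Fin e → Bool} {s t : Fin r} {i j : Fin e}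
    (hsi : M s i = true) (htj : M t j = true) (hsj : M s j = false) (hti : M t i = false) :
    BeadSwap M (swapBeads M s t i j) := by
  have hst : s ≠ t := by rintro rfl; simp [hsj] at htj
  have hij : i ≠ j := by rintro rfl; simp [hsj] at hsi
  refine ⟨i, j, hij, s, t, hst, hsi, htj, hsj, hti, ?_, ?_, ?_, ?_, fun s' c hout => ?_⟩ <;>
    simp only [swapBeads]
  · simp [hsi]
  · simp [htj]
  · simp [hsj]
  · simp [hti]
  · rw [if_neg (by tauto)]

lemma exists_true_false_of_sum_toNat_eq {α : Type*} [Fintype α] {f g : α → Bool}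
    (hsum : ∑ x, (f x).toNat = ∑ x, (g x).toNat) (hne : f ≠ g) :
    ∃ x, f x = true ∧ g x = false := by
  by_contra! hfg
  have hle : ∀ x ∈ univ, (f x).toNat ≤ (g x).toNat :=
    fun x _ => Bool.toNat_le_toNat fun hx => by simpa using hfg x hx
  refine hne (funext fun x => ?_)
  have hx := (Finset.sum_eq_sum_iff_of_le hle).1 hsum x (mem_univ x)
  cases hf : f x <;> cases hg : g x <;> simp_all

/-- Otherwise column `i` would have more beads than column `j` in `M` and fewer in `N`. -/
lemma exists_checkerboard_of_colSum_eq {M N : Fin r → Fin e → Bool}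
    (hcol : ∀ c, colSum M c = colSum N c) {s : Fin r} {i j : Fin e} (hMsi : M s i = true) (hNsi : N s i = false)
    (hMsj : M s j = false) (hNsj : N s j = true) :
    (∃ t, M t j = true ∧ M t i = false) ∨ (∃ t, N t i = true ∧ N t j = false) := by
  by_contra! h
  have hM : colSum M j < colSum M i :=
    Finset.sum_lt_sum (fun t _ => Bool.toNat_le_toNat fun h' => by simpa using h.1 t h')
      ⟨s, mem_univ s, by simp [hMsi, hMsj]⟩
  have hN : colSum N i < colSum N j :=
    Finset.sum_lt_sum (fun t _ => Bool.toNat_le_toNat fun h' => by simpa using h.2 t h')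
      ⟨s, mem_univ s, by simp [hNsi, hNsj]⟩
  rw [hcol, hcol] at hM
  omega

def rowDiff (M N : Fin r → Fin e → Bool) (s : Fin r) : Finset (Fin e) :=
  {c | M s c ≠ N s c}

lemma rowDiff_comm (M N : Fin r → Fin e → Bool) (s : Fin r) : rowDiff M N s = rowDiff N M s := by
  simp only [rowDiff, ne_comm]

lemma card_rowDiff_swapBeads_lt {M N : Fin r → Fin e → Bool} {s : Fin r} {i j : Fin e}
    (t : Fin r) (hi : M s i ≠ N s i) (hj : M s j ≠ N s j) :
    #(rowDiff (swapBeads M s t i j) N s) < #(rowDiff M N s) := by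
  refine Finset.card_lt_card ((Finset.ssubset_iff_of_subset fun c hc => ?_).2
    ⟨i, by simpa [rowDiff] using hi, by simp [rowDiff, swapBeads, hi]⟩)
  simp only [rowDiff, swapBeads, mem_filter, mem_univ, true_or, true_and] at hc ⊢
  split_ifs at hc with hc'
  · rcases hc' with rfl | rfl <;> simp_all
  · exact hc

lemma colSum_cons (z : Fin e → Bool) (M : Fin r → Fin e → Bool) (c : Fin e) :
    colSum (Fin.cons z M : Fin (r + 1) → Fin e → Bool) c = (z c).toNat + colSum M c :=
  Fin.sum_univ_succ _

theorem eqvGen_beadSwap_of_rowSum_colSum_eq :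
    ∀ {r : ℕ} {M N : Fin r → Fin e → Bool}, (∀ s, rowSum M s = rowSum N s) →
      (∀ c, colSum M c = colSum N c) → Relation.EqvGen BeadSwap M N
  | 0, M, N, _, _ => Subsingleton.elim M N ▸ .refl M
  | r + 1, M, N, hrow, hcol => by
    induction hd : #(rowDiff M N 0) using Nat.strong_induction_on generalizing M N with
    | _ d ih =>
    by_cases h0 : M 0 = N 0
    · rw [← Fin.cons_self_tail M, ← Fin.cons_self_tail N, h0]
      refine eqvGen_beadSwap_cons _ (eqvGen_beadSwap_of_rowSum_colSum_eq
        (fun s => hrow s.succ) fun c => ?_)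
      have := hcol c
      rw [← Fin.cons_self_tail M, ← Fin.cons_self_tail N, colSum_cons, colSum_cons, h0] at this
      exact Nat.add_left_cancel this
    obtain ⟨i, hMi, hNi⟩ := exists_true_false_of_sum_toNat_eq (hrow 0) h0
    obtain ⟨j, hNj, hMj⟩ := exists_true_false_of_sum_toNat_eq (hrow 0).symm (Ne.symm h0)
    have hi : M 0 i ≠ N 0 i := by simp [hMi, hNi]
    have hj : M 0 j ≠ N 0 j := by simp [hMj, hNj]
    rcases exists_checkerboard_of_colSum_eq hcol hMi hNi hMj hNj with ⟨t, htj, hti⟩ | ⟨t, hti, htj⟩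
    · have hswap := beadSwap_swapBeads hMi htj hMj hti
      refine .trans _ _ _ (.rel _ _ hswap) (ih _ ?_ _ _ (fun s => ?_) (fun c => ?_) rfl)
      · exact hd ▸ card_rowDiff_swapBeads_lt t hi hj
      · rw [hswap.rowSum_eq, hrow]
      · rw [hswap.colSum_eq, hcol]
    · have hswap := beadSwap_swapBeads hNj hti hNi htj
      refine .trans _ _ _ (ih _ ?_ _ _ (fun s => ?_) (fun c => ?_) rfl) (.symm _ _ (.rel _ _ hswap))
      · rw [← hd, rowDiff_comm, rowDiff_comm M]
        exact card_rowDiff_swapBeads_lt t hj.symm hi.symm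
      · rw [hswap.rowSum_eq, hrow]
      · rw [hswap.colSum_eq, hcol]

end Interchange

section RowColumnSums

variable {e r : ℕ} {Y : Fin r → Finset (Fin e)}

lemma mem_Yat_iff {a : ℕ} {c : Fin e} : c ∈ Yat r Y a ↔ ∃ h : a < r, c ∈ Y ⟨a, h⟩ := by
  unfold Yat
  split_ifs with h <;> simp [h]

lemma LambdaMem.eq_of_mem (hY : LambdaMem r Y) {a b : Fin r} {c : Fin e} (ha : c ∈ Y a)
    (hb : c ∈ Y b) : a = b :=
  by_contra fun hab => Finset.disjoint_left.1 (hY.1 a b hab) ha hb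

lemma LambdaMem.eq_of_mem_Yat (hY : LambdaMem r Y) {a b : ℕ} {c : Fin e} (ha : c ∈ Yat r Y a)
    (hb : c ∈ Yat r Y b) : a = b := by
  obtain ⟨_, ha⟩ := mem_Yat_iff.1 ha
  obtain ⟨_, hb⟩ := mem_Yat_iff.1 hb
  exact Fin.mk.inj_iff.1 (hY.eq_of_mem ha hb)

/-- `Δ(Y,(i,j),w)` before any column is replaced by a `c_m(i,j)`. -/
def blockMatrix (r : ℕ) (Y : Fin r → Finset (Fin e)) : Fin r → Fin e → Bool :=
  fun s c => if h : ∃ a : Fin r, c ∈ Y a then Ivec r (Classical.choose h).1 s else false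

lemma blockMatrix_of_mem (hY : LambdaMem r Y) {a : Fin r} {c : Fin e} (hc : c ∈ Y a) (s : Fin r) :
    blockMatrix r Y s c = Ivec r a s := by
  have h : ∃ a : Fin r, c ∈ Y a := ⟨a, hc⟩
  simp only [blockMatrix, dif_pos h, hY.eq_of_mem (Classical.choose_spec h) hc]

lemma sum_Ivec_toNat {a : ℕ} (ha : a ≤ r) : ∑ s : Fin r, (Ivec r a s).toNat = a := by
  have h : ∀ s : Fin r, (Ivec r a s).toNat = if s.1 < a then 1 else 0 := fun s => by
    by_cases hs : s.1 < a <;> simp [Ivec, hs]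
  simp only [h, Finset.sum_boole, Fin.card_filter_val_lt, Nat.cast_id]
  omega

lemma sum_ite_val_add_one_eq {j : ℕ} (h1 : 1 ≤ j) (h2 : j ≤ r) :
    ∑ s : Fin r, (if s.1 + 1 = j then 1 else 0) = 1 := by
  rw [Fintype.sum_eq_single ⟨j - 1, by omega⟩ fun s hs =>
    if_neg fun h => hs (Fin.ext (by simp only; omega))]
  simp only [ite_eq_left_iff]
  omega

namespace PtPairCond

variable {t : ℕ} {y : ℕ → ℕ} {iseq : Fin t → ℕ} {jseq : Fin (t + 1) → ℕ}
  (hP : PtPairCond r t y iseq jseq)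
include hP

lemma strictMono_jseq : StrictMono jseq :=
  Fin.strictMono_iff_lt_succ.2 fun m => (hP.2.2.1 m).trans_lt (hP.2.2.2.1 m)

lemma one_le_jseq (k : Fin (t + 1)) : 1 ≤ jseq k :=
  hP.1 ▸ hP.strictMono_jseq.monotone (Fin.zero_le k)

lemma jseq_le (k : Fin (t + 1)) : jseq k ≤ r :=
  hP.2.1 ▸ hP.strictMono_jseq.monotone (Fin.le_last k)

lemma strictMono_iseq : StrictMono iseq := by
  cases t with
  | zero => exact fun a => a.elim0
  | succ t =>
    refine Fin.strictMono_iff_lt_succ.2 fun m => (hP.2.2.2.1 m.castSucc).trans_le ?_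
    rw [Fin.succ_castSucc]
    exact hP.2.2.1 m.succ

end PtPairCond

section Columns

variable {t : ℕ} {iseq : Fin t → ℕ} {jseq : Fin (t + 1) → ℕ}

lemma cvec_toNat_add {m : Fin t} (hji : jseq m.castSucc ≤ iseq m) (hij : iseq m < jseq m.succ)
    (b : Fin r) :
    (cvec r iseq jseq m b).toNat + (if b.1 + 1 = jseq m.castSucc then 1 else 0) =
      (Ivec r (iseq m) b).toNat + (if b.1 + 1 = jseq m.succ then 1 else 0) := by
  unfold cvec Ivec
  split_ifs <;> simp only [Bool.toNat, Bool.cond_decide] <;> split_ifs <;> omega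

lemma PtPairCond.sum_cvec_toNat {y : ℕ → ℕ} (hP : PtPairCond r t y iseq jseq) (m : Fin t) :
    ∑ b, (cvec r iseq jseq m b).toNat = iseq m := by
  have him : iseq m ≤ r := (hP.2.2.2.1 m).le.trans (hP.jseq_le _)
  have h := Fintype.sum_congr _ _ fun (b : Fin r) => cvec_toNat_add (hP.2.2.1 m) (hP.2.2.2.1 m) b
  rw [sum_add_distrib, sum_add_distrib, sum_Ivec_toNat him,
    sum_ite_val_add_one_eq (hP.one_le_jseq _) (hP.jseq_le _),
    sum_ite_val_add_one_eq (hP.one_le_jseq _) (hP.jseq_le _)] at h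
  omega

variable {w : Fin t → ℕ} (hY : LambdaMem r Y)
  (hP : PtPairCond r t (fun a => (Yat r Y a).card) iseq jseq)
  (hw : ∀ u, 1 ≤ w u ∧ w u ≤ (Yat r Y (iseq u)).card)
include hY hP hw

lemma exists_selection_DeltaM :
    ∃ sel : Fin t ↪ Fin e, (∀ u, sel u ∈ Yat r Y (iseq u)) ∧
      (∀ u s, DeltaM r Y iseq jseq w s (sel u) = cvec r iseq jseq u s) ∧
      ∀ c, c ∉ Set.range sel → ∀ s, DeltaM r Y iseq jseq w s c = blockMatrix r Y s c := by
  have hex : ∀ u, ∃ c, ((Yat r Y (iseq u)).sort (· ≤ ·))[w u - 1]? = some c := fun u =>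
    ⟨_, List.getElem?_eq_getElem (by rw [Finset.length_sort]; have := hw u; omega)⟩
  choose sel hsel using hex
  have hmem : ∀ u, sel u ∈ Yat r Y (iseq u) :=
    fun u => (Finset.mem_sort _).1 (List.mem_of_getElem? (hsel u))
  have hinj : Function.Injective sel := fun u v huv =>
    hP.strictMono_iseq.injective (hY.eq_of_mem_Yat (hmem u) (huv ▸ hmem v))
  have hon : ∀ u s, DeltaM r Y iseq jseq w s (sel u) = cvec r iseq jseq u s := fun u s => by
    have h : ∃ v, ((Yat r Y (iseq v)).sort (· ≤ ·))[w v - 1]? = some (sel u) := ⟨u, hsel u⟩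
    rw [DeltaM, dif_pos h,
      hinj (Option.some_injective _ ((hsel _).symm.trans (Classical.choose_spec h)))]
  have hoff : ∀ c, c ∉ Set.range sel → ∀ s, DeltaM r Y iseq jseq w s c = blockMatrix r Y s c :=
    fun c hc s => dif_neg fun ⟨u, hu⟩ => hc ⟨u, Option.some_injective _ ((hsel u).symm.trans hu)⟩
  exact ⟨⟨sel, hinj⟩, hmem, hon, hoff⟩

lemma colSum_DeltaM {a : Fin r} {c : Fin e} (hc : c ∈ Y a) :
    colSum (DeltaM r Y iseq jseq w) c = a := by
  obtain ⟨sel, hmem, hsel, hoff⟩ := exists_selection_DeltaM hY hP hw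
  by_cases hcs : c ∈ Set.range sel
  · obtain ⟨u, rfl⟩ := hcs
    have hia : iseq u = a := hY.eq_of_mem_Yat (hmem u) (mem_Yat_iff.2 ⟨a.2, hc⟩)
    simp only [colSum, hsel]
    rw [hP.sum_cvec_toNat u, hia]
  · simp only [colSum, hoff c hcs, blockMatrix_of_mem hY hc]
    exact sum_Ivec_toNat a.2.le

lemma rowSum_DeltaM_add (b : Fin r) :
    rowSum (DeltaM r Y iseq jseq w) b + (if b.1 + 1 = 1 then 1 else 0) =
      rowSum (blockMatrix r Y) b + (if b.1 + 1 = r then 1 else 0) := by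
  obtain ⟨sel, hmem, hsel, hoff⟩ := exists_selection_DeltaM hY hP hw
  have hsplit : ∀ M : Fin r → Fin e → Bool, rowSum M b =
      ∑ u, (M b (sel u)).toNat + ∑ c ∈ (univ.map sel)ᶜ, (M b c).toNat := fun M => by
    rw [rowSum, ← sum_add_sum_compl (univ.map sel), sum_map]
  have hrest : ∑ c ∈ (univ.map sel)ᶜ, (DeltaM r Y iseq jseq w b c).toNat =
      ∑ c ∈ (univ.map sel)ᶜ, (blockMatrix r Y b c).toNat :=
    sum_congr rfl fun c hc => by rw [hoff c (by simpa using hc)]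
  have hcols : ∑ u, (DeltaM r Y iseq jseq w b (sel u)).toNat +
        ∑ u : Fin t, (if b.1 + 1 = jseq u.castSucc then 1 else 0) =
      ∑ u, (blockMatrix r Y b (sel u)).toNat +
        ∑ u : Fin t, (if b.1 + 1 = jseq u.succ then 1 else 0) := by
    rw [← sum_add_distrib, ← sum_add_distrib]
    refine sum_congr rfl fun u _ => ?_
    obtain ⟨_, hmu⟩ := mem_Yat_iff.1 (hmem u)
    rw [hsel, blockMatrix_of_mem hY hmu]
    exact cvec_toNat_add (hP.2.2.1 u) (hP.2.2.2.1 u) b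
  have htel := (Fin.sum_univ_castSucc fun k => if b.1 + 1 = jseq k then 1 else 0).symm.trans
    (Fin.sum_univ_succ fun k => if b.1 + 1 = jseq k then 1 else 0)
  simp only [hP.1, hP.2.1] at htel
  rw [hsplit, hsplit, hrest]
  omega

end Columns

variable {π : Equiv.Perm (Fin r)} {M : Fin r → Fin e → Bool}

lemma rowSum_add_of_mem_Nset (hY : LambdaMem r Y) (hM : M ∈ Nset r Y π) (s : Fin r) :
    rowSum M s + (if (π s).1 + 1 = 1 then 1 else 0) =
      rowSum (blockMatrix r Y) (π s) + (if (π s).1 + 1 = r then 1 else 0) := by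
  obtain ⟨t, -, -, iseq, jseq, w, hP, hw, rfl⟩ := hM
  exact rowSum_DeltaM_add hY hP hw (π s)

lemma colSum_of_mem_Nset (hY : LambdaMem r Y) (hM : M ∈ Nset r Y π) {a : Fin r} {c : Fin e}
    (hc : c ∈ Y a) : colSum M c = a := by
  obtain ⟨t, -, -, iseq, jseq, w, hP, hw, rfl⟩ := hM
  exact (Equiv.sum_comp π fun s => (DeltaM r Y iseq jseq w s c).toNat).trans
    (colSum_DeltaM hY hP hw hc)

lemma Nzero_mem_Nset (hr : 2 ≤ r) (hY₁ : (Yat r Y 1).Nonempty) (π : Equiv.Perm (Fin r)) :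
    Nzero r Y π ∈ Nset r Y π := by
  have h1 : 1 ≤ (Yat r Y 1).card := Finset.card_pos.2 hY₁
  exact ⟨1, le_rfl, by omega, fun _ => 1, ![1, r], fun _ => 1,
    ⟨rfl, rfl, Fin.forall_fin_one.2 le_rfl, Fin.forall_fin_one.2 hr, fun _ => h1⟩,
    fun _ => ⟨le_rfl, h1⟩, rfl⟩

end RowColumnSums

theorem Nset_equiv_Nzero_general (e r : ℕ) (hr : 2 ≤ r)
    (Y : Fin r → Finset (Fin e)) (hY : LambdaMem r Y)
    (π : Equiv.Perm (Fin r))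
    (M : Fin r → Fin e → Bool) (hM : M ∈ Nset r Y π) :
    Relation.EqvGen BeadSwap M (Nzero r Y π) := by
  have hN := Nzero_mem_Nset hr hY.2.2.1 π
  refine eqvGen_beadSwap_of_rowSum_colSum_eq (fun s => ?_) (fun c => ?_)
  · have hMs := rowSum_add_of_mem_Nset hY hM s
    have hNs := rowSum_add_of_mem_Nset hY hN s
    omega
  · obtain ⟨a, ha⟩ := hY.2.1 c
    rw [colSum_of_mem_Nset hY hM ha, colSum_of_mem_Nset hY hN ha]

/-- Every element of `𝔑(Y,π)` is bead-swap equivalent to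
`N₀(Y,π) = Δ^π(Y,((1),(1,r)),(1))`. -/
theorem Nset_equiv_Nzero (e r : ℕ) (he : 2 ≤ e) (hr : 2 ≤ r)
    (Y : Fin r → Finset (Fin e)) (hY : LambdaMem r Y)
    (π : Equiv.Perm (Fin r))
    (M : Fin r → Fin e → Bool) (hM : M ∈ Nset r Y π) :
    Relation.EqvGen BeadSwap M (Nzero r Y π) :=
  Nset_equiv_Nzero_general e r hr Y hY π M hM

end
end AK
end
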